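/- arXiv:2103.01473 — 8 statements merged into one kernel-verified Lean document; each statement's English description precedes it below -/
import Mathlib

section
/- Suppose cos θ0 = sin θ0 · sin θ1. Then for every time t ∈ ℕ, the first moment of the open quantum walk satisfies E₁(t) = (2p − 1)·s0²·c1²·t, where c0 = cos θ0, s0 = sin θ0, c1 = cos θ1, s1 = sin θ1. -/
open Matrix Complex Filter

/-- Local operation `P(θ0,θ1)`. -/
noncomputable def Pmat (θ0 θ1 : ℝ) : Matrix (Fin 2) (Fin 2) ℂ :=
  !![0, (Real.cos θ0 : ℂ);
     ((Real.sin θ0 * Real.sin θ1 : ℝ) : ℂ), (-((Real.sin θ0 * Real.cos θ1 : ℝ) : ℂ))]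

/-- Local operation `Q(θ0,θ1)`. -/
noncomputable def Qmat (θ0 θ1 : ℝ) : Matrix (Fin 2) (Fin 2) ℂ :=
  !![((Real.sin θ0 * Real.cos θ1 : ℝ) : ℂ), ((Real.sin θ0 * Real.sin θ1 : ℝ) : ℂ);
     (Real.cos θ0 : ℂ), 0]

/-- The open quantum walk on ℤ with initial state `diagonal (p, 1-p)` at the origin. -/
noncomputable def owalk (θ0 θ1 p : ℝ) : ℕ → ℤ → Matrix (Fin 2) (Fin 2) ℂ
  | 0, x => if x = 0 then Matrix.diagonal ![(p : ℂ), ((1 - p : ℝ) : ℂ)] else 0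
  | t + 1, x =>
      Pmat θ0 θ1 * owalk θ0 θ1 p t (x + 1) * (Pmat θ0 θ1)ᴴ
        + Qmat θ0 θ1 * owalk θ0 θ1 p t (x - 1) * (Qmat θ0 θ1)ᴴ

/-- Finding probability at position `x` at time `t`. -/
noncomputable def findprob (θ0 θ1 p : ℝ) (t : ℕ) (x : ℤ) : ℝ :=
  ((owalk θ0 θ1 p t x).trace).re

/-- First moment (finite sum: the walk vanishes outside `[-t, t]`). -/
noncomputable def moment1 (θ0 θ1 p : ℝ) (t : ℕ) : ℝ :=
  ∑ x ∈ Finset.Icc (-(t : ℤ)) (t : ℤ), (x : ℝ) * findprob θ0 θ1 p t x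

/-- Second moment. -/
noncomputable def moment2 (θ0 θ1 p : ℝ) (t : ℕ) : ℝ :=
  ∑ x ∈ Finset.Icc (-(t : ℤ)) (t : ℤ), (x : ℝ) ^ 2 * findprob θ0 θ1 p t x

/-- Standard deviation. -/
noncomputable def stdDev (θ0 θ1 p : ℝ) (t : ℕ) : ℝ :=
  Real.sqrt (moment2 θ0 θ1 p t - (moment1 θ0 θ1 p t) ^ 2)

/-!
Since `PᴴP + QᴴQ = 1`, one step of the walk changes the first moment by `Re tr(M Sₜ)`, where
`M = QᴴQ - PᴴP` and `Sₜ = ∑ₓ ρ t x` evolves by the channel `S ↦ PSPᴴ + QSQᴴ`. The condition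
`c0 = s0 s1` makes `M` a fixed point of the dual channel `X ↦ PᴴXP + QᴴXQ`, so
`tr(M Sₜ) = tr(M S₀) = (2p - 1) s0² c1²` for every `t`, and `E₁` grows linearly.
-/

open Finset

lemma sum_Icc_succ_comp_add {E : Type*} [AddCommMonoid E] {t : ℕ} {f : ℤ → E}
    (hf : ∀ x ∉ Icc (-(t : ℤ)) t, f x = 0) {c : ℤ} (hc : |c| ≤ 1) :
    ∑ x ∈ Icc (-((t + 1 : ℕ) : ℤ)) ((t + 1 : ℕ) : ℤ), f (x + c)
      = ∑ x ∈ Icc (-(t : ℤ)) t, f x := by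
  rw [show ∑ x ∈ Icc (-((t + 1 : ℕ) : ℤ)) ((t + 1 : ℕ) : ℤ), f (x + c) = _ from
    (sum_map _ (addRightEmbedding c) f).symm, map_add_right_Icc]
  refine (sum_subset (fun x hx => ?_) fun x _ hx => hf x hx).symm
  rw [abs_le] at hc
  simp only [mem_Icc] at hx ⊢
  push_cast
  omega

section OpenWalkStep

variable {n : Type*} [Fintype n] [DecidableEq n] (P Q : Matrix n n ℂ)

def openWalkStep (ρ : ℤ → Matrix n n ℂ) (x : ℤ) : Matrix n n ℂ :=
  P * ρ (x + 1) * Pᴴ + Q * ρ (x - 1) * Qᴴ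

variable {P Q} {ρ : ℤ → Matrix n n ℂ} {t : ℕ}

lemma openWalkStep_eq_zero (hρ : ∀ x ∉ Icc (-(t : ℤ)) t, ρ x = 0) :
    ∀ x ∉ Icc (-((t + 1 : ℕ) : ℤ)) ((t + 1 : ℕ) : ℤ), openWalkStep P Q ρ x = 0 := by
  intro x hx
  simp only [mem_Icc, not_and_or, not_le] at hx
  push_cast at hx
  rw [openWalkStep, hρ (x + 1) (by simp only [mem_Icc]; omega),
    hρ (x - 1) (by simp only [mem_Icc]; omega)]
  simp

lemma sum_openWalkStep (hρ : ∀ x ∉ Icc (-(t : ℤ)) t, ρ x = 0) :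
    ∑ x ∈ Icc (-((t + 1 : ℕ) : ℤ)) ((t + 1 : ℕ) : ℤ), openWalkStep P Q ρ x
      = P * (∑ x ∈ Icc (-(t : ℤ)) t, ρ x) * Pᴴ + Q * (∑ x ∈ Icc (-(t : ℤ)) t, ρ x) * Qᴴ := by
  have hP := sum_Icc_succ_comp_add (t := t) (f := fun y => P * ρ y * Pᴴ)
    (fun y hy => by simp [hρ y hy]) (c := 1) (by norm_num)
  have hQ := sum_Icc_succ_comp_add (t := t) (f := fun y => Q * ρ y * Qᴴ)
    (fun y hy => by simp [hρ y hy]) (c := -1) (by norm_num)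
  simp only [← sub_eq_add_neg] at hQ
  simp only [openWalkStep, sum_add_distrib, hP, hQ, Matrix.mul_sum, Matrix.sum_mul]

omit [DecidableEq n] in
lemma trace_mul_conj_add_conj (M S : Matrix n n ℂ) :
    (M * (P * S * Pᴴ + Q * S * Qᴴ)).trace = ((Pᴴ * M * P + Qᴴ * M * Q) * S).trace := by
  simp only [Matrix.mul_add, Matrix.add_mul, trace_add, Matrix.mul_assoc]
  rw [trace_mul_comm Pᴴ, trace_mul_comm Qᴴ]
  simp only [Matrix.mul_assoc]

lemma re_trace_conj_weighted (hPQ : Pᴴ * P + Qᴴ * Q = 1)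
    (σ : Matrix n n ℂ) (r : ℝ) :
    (r - 1) * (P * σ * Pᴴ).trace.re + (r + 1) * (Q * σ * Qᴴ).trace.re
      = r * σ.trace.re + ((Qᴴ * Q - Pᴴ * P) * σ).trace.re := by
  have hσ : σ.trace = (Pᴴ * P * σ).trace + (Qᴴ * Q * σ).trace := by
    rw [← trace_add, ← Matrix.add_mul, hPQ, Matrix.one_mul]
  rw [trace_mul_cycle, trace_mul_cycle Q, Matrix.sub_mul, trace_sub, hσ]
  simp only [add_re, sub_re]
  ring

lemma sum_mul_re_trace_openWalkStep (hPQ : Pᴴ * P + Qᴴ * Q = 1)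
    (hρ : ∀ x ∉ Icc (-(t : ℤ)) t, ρ x = 0) :
    ∑ x ∈ Icc (-((t + 1 : ℕ) : ℤ)) ((t + 1 : ℕ) : ℤ),
        (x : ℝ) * (openWalkStep P Q ρ x).trace.re
      = ∑ x ∈ Icc (-(t : ℤ)) t, (x : ℝ) * (ρ x).trace.re
        + ((Qᴴ * Q - Pᴴ * P) * ∑ x ∈ Icc (-(t : ℤ)) t, ρ x).trace.re := by
  have hP := sum_Icc_succ_comp_add (t := t)
    (f := fun y => ((y : ℝ) - 1) * (P * ρ y * Pᴴ).trace.re)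
    (fun y hy => by simp [hρ y hy]) (c := 1) (by norm_num)
  have hQ := sum_Icc_succ_comp_add (t := t)
    (f := fun y => ((y : ℝ) + 1) * (Q * ρ y * Qᴴ).trace.re)
    (fun y hy => by simp [hρ y hy]) (c := -1) (by norm_num)
  simp only [← sub_eq_add_neg, Int.cast_add, Int.cast_sub, Int.cast_one, add_sub_cancel_right,
    sub_add_cancel] at hP hQ
  simp only [openWalkStep, trace_add, add_re, mul_add, sum_add_distrib]
  rw [hP, hQ, Matrix.mul_sum, trace_sum, re_sum, ← sum_add_distrib, ← sum_add_distrib]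
  exact sum_congr rfl fun x _ => re_trace_conj_weighted hPQ (ρ x) x

end OpenWalkStep

section Owalk

variable (θ0 θ1 p : ℝ)

noncomputable def driftOp : Matrix (Fin 2) (Fin 2) ℂ :=
  (Qmat θ0 θ1)ᴴ * Qmat θ0 θ1 - (Pmat θ0 θ1)ᴴ * Pmat θ0 θ1

noncomputable def owalkTotal (t : ℕ) : Matrix (Fin 2) (Fin 2) ℂ :=
  ∑ x ∈ Icc (-(t : ℤ)) t, owalk θ0 θ1 p t x

lemma owalk_succ (t : ℕ) :
    owalk θ0 θ1 p (t + 1) = openWalkStep (Pmat θ0 θ1) (Qmat θ0 θ1) (owalk θ0 θ1 p t) := by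
  ext1 x
  rw [owalk, openWalkStep]

lemma owalk_eq_zero (t : ℕ) : ∀ x ∉ Icc (-(t : ℤ)) t, owalk θ0 θ1 p t x = 0 := by
  induction t with
  | zero =>
    intro x hx
    simp_all [owalk]
  | succ t ih =>
    rw [owalk_succ]
    exact openWalkStep_eq_zero ih

lemma kraus_completeness_Pmat_Qmat :
    (Pmat θ0 θ1)ᴴ * Pmat θ0 θ1 + (Qmat θ0 θ1)ᴴ * Qmat θ0 θ1 = 1 := by
  have h0 := Real.sin_sq_add_cos_sq θ0
  have h1 := Real.sin_sq_add_cos_sq θ1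
  ext i j
  fin_cases i <;> fin_cases j <;>
    simp [Pmat, Qmat, Matrix.mul_apply, Fin.sum_univ_two,
      -Complex.ofReal_cos, -Complex.ofReal_sin] <;>
    norm_cast <;>
    first
    | ring1
    | linear_combination Real.sin θ0 ^ 2 * h1 + h0

lemma driftOp_invariant (h : Real.cos θ0 = Real.sin θ0 * Real.sin θ1) :
    (Pmat θ0 θ1)ᴴ * driftOp θ0 θ1 * Pmat θ0 θ1 + (Qmat θ0 θ1)ᴴ * driftOp θ0 θ1 * Qmat θ0 θ1
      = driftOp θ0 θ1 := by
  have h0 := Real.sin_sq_add_cos_sq θ0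
  have h1 := Real.sin_sq_add_cos_sq θ1
  rw [h] at h0
  set s0 := Real.sin θ0
  set s1 := Real.sin θ1
  set c1 := Real.cos θ1
  ext i j
  fin_cases i <;> fin_cases j <;>
    simp [driftOp, Pmat, Qmat, Matrix.mul_apply, Fin.sum_univ_two, h,
      -Complex.ofReal_cos, -Complex.ofReal_sin] <;>
    norm_cast <;>
    first
    | linear_combination s0 ^ 4 * c1 ^ 2 * h1 + s0 ^ 2 * c1 ^ 2 * h0
    | linear_combination 2 * s0 ^ 4 * s1 * c1 * h1 + 2 * s0 ^ 2 * s1 * c1 * h0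
    | linear_combination -(s0 ^ 4 * c1 ^ 2 * h1 + s0 ^ 2 * c1 ^ 2 * h0)

lemma owalkTotal_succ (t : ℕ) :
    owalkTotal θ0 θ1 p (t + 1)
      = Pmat θ0 θ1 * owalkTotal θ0 θ1 p t * (Pmat θ0 θ1)ᴴ
        + Qmat θ0 θ1 * owalkTotal θ0 θ1 p t * (Qmat θ0 θ1)ᴴ := by
  rw [owalkTotal, owalk_succ, sum_openWalkStep (owalk_eq_zero θ0 θ1 p t), owalkTotal]

lemma trace_driftOp_mul_owalkTotal (h : Real.cos θ0 = Real.sin θ0 * Real.sin θ1) (t : ℕ) :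
    (driftOp θ0 θ1 * owalkTotal θ0 θ1 p t).trace
      = (driftOp θ0 θ1 * owalkTotal θ0 θ1 p 0).trace := by
  induction t with
  | zero => rfl
  | succ t ih => rw [owalkTotal_succ, trace_mul_conj_add_conj, driftOp_invariant θ0 θ1 h, ih]

lemma trace_driftOp_mul_owalkTotal_zero (h : Real.cos θ0 = Real.sin θ0 * Real.sin θ1) :
    (driftOp θ0 θ1 * owalkTotal θ0 θ1 p 0).trace
      = ((2 * p - 1) * Real.sin θ0 ^ 2 * Real.cos θ1 ^ 2 : ℝ) := by
  simp [owalkTotal, owalk, driftOp, Pmat, Qmat, Matrix.trace, Matrix.mul_apply,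
    Fin.sum_univ_two, h, -Complex.ofReal_cos, -Complex.ofReal_sin]
  push_cast
  ring

lemma moment1_succ (t : ℕ) :
    moment1 θ0 θ1 p (t + 1)
      = moment1 θ0 θ1 p t + (driftOp θ0 θ1 * owalkTotal θ0 θ1 p t).trace.re := by
  simp only [moment1, findprob, owalk_succ]
  exact sum_mul_re_trace_openWalkStep (kraus_completeness_Pmat_Qmat θ0 θ1)
    (owalk_eq_zero θ0 θ1 p t)

end Owalk

theorem owalk_moment1_eq_general (θ0 θ1 p : ℝ)
    (h : Real.cos θ0 = Real.sin θ0 * Real.sin θ1) :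
    ∀ t : ℕ, moment1 θ0 θ1 p t =
      (2 * p - 1) * Real.sin θ0 ^ 2 * Real.cos θ1 ^ 2 * t := by
  intro t
  induction t with
  | zero => simp [moment1]
  | succ t ih =>
    rw [moment1_succ, ih, trace_driftOp_mul_owalkTotal θ0 θ1 p h,
      trace_driftOp_mul_owalkTotal_zero θ0 θ1 p h, ofReal_re]
    push_cast
    ring

theorem owalk_moment1_eq (θ0 θ1 p : ℝ) (hp0 : 0 ≤ p) (hp1 : p ≤ 1)
    (h : Real.cos θ0 = Real.sin θ0 * Real.sin θ1) :
    ∀ t : ℕ, moment1 θ0 θ1 p t =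
      (2 * p - 1) * Real.sin θ0 ^ 2 * Real.cos θ1 ^ 2 * t :=
  owalk_moment1_eq_general θ0 θ1 p h
end

section
/- Suppose cos θ0 = sin θ0 · sin θ1. Then for every time t ∈ ℕ, the variance of the open quantum walk satisfies E₂(t) − E₁(t)² = s0⁴·c1²·(1 + 3·s1² − (2p − 1)²·c1²)·t² + s0²·(1 + s1² − s0²·c1²·(1 + 3·s1²))·t, where c0 = cos θ0, s0 = sin θ0, c1 = cos θ1, s1 = sin θ1. -/
open Matrix Complex Filter

/-!
Work in the Heisenberg picture: for an observable `X`, the weighted moment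
`Σₓ xᵏ tr (X ρₜ(x))` at time `t + 1` is a combination of lower moments at time `t` of the
dual channel `PᴴXP + QᴴXQ` and the dual drift `QᴴXQ - PᴴXP` applied to `X`. When
`c0 = s0 s1`, the span of `1` and `W = [[c1, 2 s1], [2 s1, -c1]]` is invariant: the dual channel
fixes both, and the dual drift sends `1 ↦ s0² c1 W` and `W ↦ s0² c1 (1 + 3 s1²) 1`. So the
zeroth moments are constant, the first moments grow linearly and the second moment of `1` is
quadratic in `t`, all explicitly.
-/

theorem Finset.sum_Icc_comp_add_eq_of_vanishing {M : Type*} [AddCommMonoid M] {f : ℤ → M} {t : ℕ}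
    (hf : ∀ y, (t : ℤ) < |y| → f y = 0) {d : ℤ} (hd : |d| ≤ 1) :
    ∑ x ∈ Finset.Icc (-(t + 1 : ℤ)) (t + 1), f (x + d) = ∑ y ∈ Finset.Icc (-(t : ℤ)) t, f y := by
  have hshift : ∑ y ∈ Finset.Icc (-(t + 1 : ℤ) + d) (t + 1 + d), f y
      = ∑ x ∈ Finset.Icc (-(t + 1 : ℤ)) (t + 1), f (x + d) := by
    rw [← Finset.map_add_right_Icc, Finset.sum_map]; rfl
  rw [← hshift]
  rw [abs_le] at hd
  refine (Finset.sum_subset (Finset.Icc_subset_Icc (by omega) (by omega)) fun y _ hy => hf y ?_).symm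
  rw [Finset.mem_Icc, not_and_or, not_le, not_le] at hy
  rw [lt_abs]
  omega

theorem Matrix.trace_mul_conjTranspose_sandwich {n R : Type*} [Fintype n] [CommRing R] [StarRing R]
    (X K A : Matrix n n R) : trace (X * (K * A * Kᴴ)) = trace (Kᴴ * X * K * A) := by
  rw [← Matrix.mul_assoc, trace_mul_comm, ← Matrix.mul_assoc, ← Matrix.mul_assoc]

theorem owalk_eq_zero_of_lt_abs (θ0 θ1 p : ℝ) {t : ℕ} {x : ℤ} (hx : (t : ℤ) < |x|) :
    owalk θ0 θ1 p t x = 0 := by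
  induction t generalizing x with
  | zero => simp [owalk, abs_pos.mp hx]
  | succ t ih =>
    rw [lt_abs] at hx
    rw [owalk, ih (by rw [lt_abs]; omega), ih (by rw [lt_abs]; omega)]
    simp

noncomputable def Wmat (θ1 : ℝ) : Matrix (Fin 2) (Fin 2) ℂ :=
  !![(Real.cos θ1 : ℂ), 2 * (Real.sin θ1 : ℂ); 2 * (Real.sin θ1 : ℂ), -(Real.cos θ1 : ℂ)]

theorem ofReal_sin_sq_add_cos_sq (θ : ℝ) : (Real.sin θ : ℂ) ^ 2 + (Real.cos θ : ℂ) ^ 2 = 1 := by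
  exact_mod_cast Real.sin_sq_add_cos_sq θ

section DualChannel

variable (θ0 θ1 : ℝ)

noncomputable def dualChannel (X : Matrix (Fin 2) (Fin 2) ℂ) : Matrix (Fin 2) (Fin 2) ℂ :=
  (Pmat θ0 θ1)ᴴ * X * Pmat θ0 θ1 + (Qmat θ0 θ1)ᴴ * X * Qmat θ0 θ1

noncomputable def dualDrift (X : Matrix (Fin 2) (Fin 2) ℂ) : Matrix (Fin 2) (Fin 2) ℂ :=
  (Qmat θ0 θ1)ᴴ * X * Qmat θ0 θ1 - (Pmat θ0 θ1)ᴴ * X * Pmat θ0 θ1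

theorem dualChannel_one : dualChannel θ0 θ1 1 = 1 := by
  have h0 := ofReal_sin_sq_add_cos_sq θ0
  have h1 := ofReal_sin_sq_add_cos_sq θ1
  ext i j
  fin_cases i <;> fin_cases j <;>
    simp [dualChannel, Pmat, Qmat, Matrix.mul_apply, Fin.sum_univ_two, -Complex.ofReal_sin,
      -Complex.ofReal_cos] <;> grind

variable {θ0 θ1} (h : Real.cos θ0 = Real.sin θ0 * Real.sin θ1)
include h

theorem dualDrift_one : dualDrift θ0 θ1 1 = ((Real.sin θ0 ^ 2 * Real.cos θ1 : ℝ) : ℂ) • Wmat θ1 := by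
  have h0 := ofReal_sin_sq_add_cos_sq θ0
  have h1 := ofReal_sin_sq_add_cos_sq θ1
  have hc : (Real.cos θ0 : ℂ) = Real.sin θ0 * Real.sin θ1 := by exact_mod_cast h
  ext i j
  fin_cases i <;> fin_cases j <;>
    simp [dualDrift, Wmat, Pmat, Qmat, Matrix.mul_apply, Fin.sum_univ_two, -Complex.ofReal_sin,
      -Complex.ofReal_cos] <;> grind

theorem dualChannel_Wmat : dualChannel θ0 θ1 (Wmat θ1) = Wmat θ1 := by
  have h0 := ofReal_sin_sq_add_cos_sq θ0
  have h1 := ofReal_sin_sq_add_cos_sq θ1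
  have hc : (Real.cos θ0 : ℂ) = Real.sin θ0 * Real.sin θ1 := by exact_mod_cast h
  ext i j
  fin_cases i <;> fin_cases j <;>
    simp [dualChannel, Wmat, Pmat, Qmat, Matrix.mul_apply, Fin.sum_univ_two, -Complex.ofReal_sin,
      -Complex.ofReal_cos] <;> grind

theorem dualDrift_Wmat :
    dualDrift θ0 θ1 (Wmat θ1)
      = ((Real.sin θ0 ^ 2 * Real.cos θ1 * (1 + 3 * Real.sin θ1 ^ 2) : ℝ) : ℂ) • 1 := by
  have h0 := ofReal_sin_sq_add_cos_sq θ0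
  have h1 := ofReal_sin_sq_add_cos_sq θ1
  have hc : (Real.cos θ0 : ℂ) = Real.sin θ0 * Real.sin θ1 := by exact_mod_cast h
  ext i j
  fin_cases i <;> fin_cases j <;>
    simp [dualDrift, Wmat, Pmat, Qmat, Matrix.mul_apply, Fin.sum_univ_two, -Complex.ofReal_sin,
      -Complex.ofReal_cos] <;> grind

end DualChannel

section Moments

variable (θ0 θ1 p : ℝ)

noncomputable def owalkMoment (X : Matrix (Fin 2) (Fin 2) ℂ) (k t : ℕ) : ℂ :=
  ∑ x ∈ Finset.Icc (-(t : ℤ)) t, (x : ℂ) ^ k * trace (X * owalk θ0 θ1 p t x)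

theorem owalkMoment_smul (c : ℂ) (X : Matrix (Fin 2) (Fin 2) ℂ) (k t : ℕ) :
    owalkMoment θ0 θ1 p (c • X) k t = c * owalkMoment θ0 θ1 p X k t := by
  simp only [owalkMoment, Finset.mul_sum, Matrix.smul_mul, trace_smul, smul_eq_mul]
  exact Finset.sum_congr rfl fun _ _ => by ring

theorem owalkMoment_zero_right (X : Matrix (Fin 2) (Fin 2) ℂ) (k : ℕ) :
    owalkMoment θ0 θ1 p X k 0 = 0 ^ k * trace (X * diagonal ![(p : ℂ), ((1 - p : ℝ) : ℂ)]) := by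
  simp [owalkMoment, owalk]

theorem owalkMoment_succ (X : Matrix (Fin 2) (Fin 2) ℂ) (k t : ℕ) :
    owalkMoment θ0 θ1 p X k (t + 1)
      = ∑ y ∈ Finset.Icc (-(t : ℤ)) t,
          (((y : ℂ) - 1) ^ k * trace ((Pmat θ0 θ1)ᴴ * X * Pmat θ0 θ1 * owalk θ0 θ1 p t y)
            + ((y : ℂ) + 1) ^ k * trace ((Qmat θ0 θ1)ᴴ * X * Qmat θ0 θ1 * owalk θ0 θ1 p t y)) := by
  have hvanish (Y : Matrix (Fin 2) (Fin 2) ℂ) (g : ℂ → ℂ) (y : ℤ) (hy : (t : ℤ) < |y|) :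
      g y * trace (Y * owalk θ0 θ1 p t y) = 0 := by
    rw [owalk_eq_zero_of_lt_abs θ0 θ1 p hy, Matrix.mul_zero, trace_zero, mul_zero]
  rw [Finset.sum_add_distrib,
    ← Finset.sum_Icc_comp_add_eq_of_vanishing (hvanish _ (fun y => (y - 1) ^ k)) (d := 1) (by simp),
    ← Finset.sum_Icc_comp_add_eq_of_vanishing (hvanish _ (fun y => (y + 1) ^ k)) (d := -1) (by simp),
    ← Finset.sum_add_distrib, owalkMoment]
  refine Finset.sum_congr (by push_cast; rfl) fun x _ => ?_
  rw [owalk, Matrix.mul_add, trace_add, trace_mul_conjTranspose_sandwich,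
    trace_mul_conjTranspose_sandwich, ← sub_eq_add_neg]
  push_cast
  rw [add_sub_cancel_right, sub_add_cancel, mul_add]

theorem owalkMoment_zero_succ (X : Matrix (Fin 2) (Fin 2) ℂ) (t : ℕ) :
    owalkMoment θ0 θ1 p X 0 (t + 1) = owalkMoment θ0 θ1 p (dualChannel θ0 θ1 X) 0 t := by
  rw [owalkMoment_succ, owalkMoment]
  refine Finset.sum_congr rfl fun y _ => ?_
  rw [dualChannel, Matrix.add_mul, trace_add]
  ring

theorem owalkMoment_one_succ (X : Matrix (Fin 2) (Fin 2) ℂ) (t : ℕ) :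
    owalkMoment θ0 θ1 p X 1 (t + 1)
      = owalkMoment θ0 θ1 p (dualChannel θ0 θ1 X) 1 t
        + owalkMoment θ0 θ1 p (dualDrift θ0 θ1 X) 0 t := by
  rw [owalkMoment_succ, owalkMoment, owalkMoment, ← Finset.sum_add_distrib]
  refine Finset.sum_congr rfl fun y _ => ?_
  rw [dualChannel, dualDrift, Matrix.add_mul, Matrix.sub_mul, trace_add, trace_sub]
  ring

theorem owalkMoment_two_succ (X : Matrix (Fin 2) (Fin 2) ℂ) (t : ℕ) :
    owalkMoment θ0 θ1 p X 2 (t + 1)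
      = owalkMoment θ0 θ1 p (dualChannel θ0 θ1 X) 2 t
        + 2 * owalkMoment θ0 θ1 p (dualDrift θ0 θ1 X) 1 t
        + owalkMoment θ0 θ1 p (dualChannel θ0 θ1 X) 0 t := by
  rw [owalkMoment_succ, owalkMoment, owalkMoment, owalkMoment, Finset.mul_sum,
    ← Finset.sum_add_distrib, ← Finset.sum_add_distrib]
  refine Finset.sum_congr rfl fun y _ => ?_
  rw [dualChannel, dualDrift, Matrix.add_mul, Matrix.sub_mul, trace_add, trace_sub]
  ring

theorem re_owalkMoment_one (k t : ℕ) :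
    (owalkMoment θ0 θ1 p 1 k t).re
      = ∑ x ∈ Finset.Icc (-(t : ℤ)) t, (x : ℝ) ^ k * findprob θ0 θ1 p t x := by
  rw [owalkMoment, Complex.re_sum]
  refine Finset.sum_congr rfl fun x _ => ?_
  rw [Matrix.one_mul, findprob, ← Complex.ofReal_intCast, ← Complex.ofReal_pow,
    Complex.re_ofReal_mul]

theorem moment1_eq_re_owalkMoment (t : ℕ) :
    moment1 θ0 θ1 p t = (owalkMoment θ0 θ1 p 1 1 t).re := by
  simp [moment1, re_owalkMoment_one]

theorem moment2_eq_re_owalkMoment (t : ℕ) :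
    moment2 θ0 θ1 p t = (owalkMoment θ0 θ1 p 1 2 t).re := by
  simp [moment2, re_owalkMoment_one]

theorem owalkMoment_one_zero (t : ℕ) : owalkMoment θ0 θ1 p 1 0 t = 1 := by
  induction t with
  | zero => simp [owalkMoment_zero_right]
  | succ t ih => rw [owalkMoment_zero_succ, dualChannel_one, ih]

variable {θ0 θ1} (h : Real.cos θ0 = Real.sin θ0 * Real.sin θ1)
include h

theorem owalkMoment_Wmat_zero (t : ℕ) :
    owalkMoment θ0 θ1 p (Wmat θ1) 0 t = ((Real.cos θ1 * (2 * p - 1) : ℝ) : ℂ) := by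
  induction t with
  | zero =>
    rw [owalkMoment_zero_right, Wmat, Matrix.trace_fin_two]
    simp [Matrix.mul_apply, Fin.sum_univ_two]
    ring
  | succ t ih => rw [owalkMoment_zero_succ, dualChannel_Wmat h, ih]

theorem owalkMoment_one_one (t : ℕ) :
    owalkMoment θ0 θ1 p 1 1 t = ((Real.sin θ0 ^ 2 * Real.cos θ1 ^ 2 * (2 * p - 1) * t : ℝ) : ℂ) := by
  induction t with
  | zero => simp [owalkMoment_zero_right]
  | succ t ih =>
    rw [owalkMoment_one_succ, dualChannel_one, dualDrift_one h, owalkMoment_smul, ih,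
      owalkMoment_Wmat_zero p h]
    push_cast
    ring

theorem owalkMoment_Wmat_one (t : ℕ) :
    owalkMoment θ0 θ1 p (Wmat θ1) 1 t
      = ((Real.sin θ0 ^ 2 * Real.cos θ1 * (1 + 3 * Real.sin θ1 ^ 2) * t : ℝ) : ℂ) := by
  induction t with
  | zero => simp [owalkMoment_zero_right]
  | succ t ih =>
    rw [owalkMoment_one_succ, dualChannel_Wmat h, dualDrift_Wmat h, owalkMoment_smul, ih,
      owalkMoment_one_zero]
    push_cast
    ring

theorem owalkMoment_one_two (t : ℕ) :
    owalkMoment θ0 θ1 p 1 2 t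
      = ((Real.sin θ0 ^ 4 * Real.cos θ1 ^ 2 * (1 + 3 * Real.sin θ1 ^ 2) * (t ^ 2 - t) + t : ℝ) : ℂ) := by
  induction t with
  | zero => simp [owalkMoment_zero_right]
  | succ t ih =>
    rw [owalkMoment_two_succ, dualChannel_one, dualDrift_one h, owalkMoment_smul, ih,
      owalkMoment_Wmat_one p h, owalkMoment_one_zero]
    push_cast
    ring

end Moments

theorem owalk_variance_eq_general (θ0 θ1 p : ℝ)
    (h : Real.cos θ0 = Real.sin θ0 * Real.sin θ1) :
    ∀ t : ℕ, moment2 θ0 θ1 p t - (moment1 θ0 θ1 p t) ^ 2 =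
      Real.sin θ0 ^ 4 * Real.cos θ1 ^ 2 *
          (1 + 3 * Real.sin θ1 ^ 2 - (2 * p - 1) ^ 2 * Real.cos θ1 ^ 2) * t ^ 2
        + Real.sin θ0 ^ 2 *
          (1 + Real.sin θ1 ^ 2 - Real.sin θ0 ^ 2 * Real.cos θ1 ^ 2 * (1 + 3 * Real.sin θ1 ^ 2)) * t := by
  intro t
  have hmean : moment1 θ0 θ1 p t = Real.sin θ0 ^ 2 * Real.cos θ1 ^ 2 * (2 * p - 1) * t := by
    rw [moment1_eq_re_owalkMoment, owalkMoment_one_one p h, Complex.ofReal_re]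
  have hsecond : moment2 θ0 θ1 p t
      = Real.sin θ0 ^ 4 * Real.cos θ1 ^ 2 * (1 + 3 * Real.sin θ1 ^ 2) * (t ^ 2 - t) + t := by
    rw [moment2_eq_re_owalkMoment, owalkMoment_one_two p h, Complex.ofReal_re]
  rw [hmean, hsecond]
  linear_combination (t : ℝ) * (Real.cos θ0 + Real.sin θ0 * Real.sin θ1) * h
    - (t : ℝ) * Real.sin_sq_add_cos_sq θ0

theorem owalk_variance_eq (θ0 θ1 p : ℝ) (hp0 : 0 ≤ p) (hp1 : p ≤ 1)
    (h : Real.cos θ0 = Real.sin θ0 * Real.sin θ1) :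
    ∀ t : ℕ, moment2 θ0 θ1 p t - (moment1 θ0 θ1 p t) ^ 2 =
      Real.sin θ0 ^ 4 * Real.cos θ1 ^ 2 *
          (1 + 3 * Real.sin θ1 ^ 2 - (2 * p - 1) ^ 2 * Real.cos θ1 ^ 2) * t ^ 2
        + Real.sin θ0 ^ 2 *
          (1 + Real.sin θ1 ^ 2 - Real.sin θ0 ^ 2 * Real.cos θ1 ^ 2 * (1 + 3 * Real.sin θ1 ^ 2)) * t :=
  owalk_variance_eq_general θ0 θ1 p h
end

section
/- Suppose cos θ0 = sin θ0 · sin θ1 and cos θ1 = 0. Then the sequence σ(t)/√t converges to 1 as t → ∞. -/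
open Matrix Complex Filter

/-!
Under these hypotheses `P = Q = cos θ0 • σₓ` with `cos² θ0 = 1/2`, so
`trace (P A Pᴴ) = trace (Q A Qᴴ) = trace A / 2` and the finding probability evolves as a simple
symmetric random walk started at `δ₀`: `μ (t+1) x = (μ t (x+1) + μ t (x-1)) / 2`. Averaging `g`
against `μ (t+1)` is averaging `(g (x-1) + g (x+1)) / 2` against `μ t`; this preserves `x` and
raises `x²` by one, so `E₁(t) = 0`, `E₂(t) = t` and `σ(t) = √t` exactly.
-/

section SymmetricWalk

variable {μ : ℕ → ℤ → ℝ}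

noncomputable def walkExpect (μ : ℕ → ℤ → ℝ) (g : ℤ → ℝ) (t : ℕ) : ℝ :=
  ∑ x ∈ Finset.Icc (-(t : ℤ)) t, g x * μ t x

lemma walkExpect_add (f g : ℤ → ℝ) (t : ℕ) :
    walkExpect μ (fun x => f x + g x) t = walkExpect μ f t + walkExpect μ g t := by
  simp only [walkExpect, add_mul, Finset.sum_add_distrib]

variable (hμ0 : ∀ x ≠ 0, μ 0 x = 0)
  (hμ : ∀ t x, μ (t + 1) x = (μ t (x + 1) + μ t (x - 1)) / 2)

include hμ0 hμ

lemma eq_zero_of_lt_abs {t : ℕ} {x : ℤ} (hx : (t : ℤ) < |x|) : μ t x = 0 := by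
  induction t generalizing x with
  | zero => exact hμ0 x (abs_pos.mp hx)
  | succ t ih =>
    rw [lt_abs] at hx
    rw [hμ, ih (by rw [lt_abs]; omega), ih (by rw [lt_abs]; omega), add_zero, zero_div]

lemma sum_Icc_eq_walkExpect (g : ℤ → ℝ) {t : ℕ} {a b : ℤ} (ha : a ≤ -t) (hb : t ≤ b) :
    ∑ x ∈ Finset.Icc a b, g x * μ t x = walkExpect μ g t := by
  refine (Finset.sum_subset (Finset.Icc_subset_Icc ha hb) fun x hab hx => ?_).symm
  rw [Finset.mem_Icc] at hab hx
  rw [eq_zero_of_lt_abs hμ0 hμ (by rw [lt_abs]; omega), mul_zero]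

lemma sum_Icc_mul_shift (g : ℤ → ℝ) (t : ℕ) (c : ℤ) (hc : |c| ≤ 1) :
    ∑ x ∈ Finset.Icc (-(t + 1 : ℕ) : ℤ) (t + 1 : ℕ), g x * μ t (x + c)
      = walkExpect μ (fun y => g (y - c)) t := by
  rw [← sum_Icc_eq_walkExpect hμ0 hμ _ (a := -(t + 1 : ℕ) + c) (b := (t + 1 : ℕ) + c)
    (by rw [abs_le] at hc; push_cast; omega) (by rw [abs_le] at hc; push_cast; omega),
    ← Finset.map_add_right_Icc, Finset.sum_map]
  simp

lemma walkExpect_succ (g : ℤ → ℝ) (t : ℕ) :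
    walkExpect μ g (t + 1) = walkExpect μ (fun x => (g (x - 1) + g (x + 1)) / 2) t := by
  calc walkExpect μ g (t + 1)
      = ∑ x ∈ Finset.Icc (-(t + 1 : ℕ) : ℤ) (t + 1 : ℕ),
          (g x / 2 * μ t (x + 1) + g x / 2 * μ t (x + -1)) :=
        Finset.sum_congr rfl fun x _ => by rw [hμ, ← sub_eq_add_neg]; ring
    _ = walkExpect μ (fun y => g (y - 1) / 2) t + walkExpect μ (fun y => g (y + 1) / 2) t := by
        rw [Finset.sum_add_distrib, sum_Icc_mul_shift hμ0 hμ _ t 1 (by norm_num),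
          sum_Icc_mul_shift hμ0 hμ _ t (-1) (by norm_num)]
        simp only [sub_neg_eq_add]
    _ = walkExpect μ (fun x => (g (x - 1) + g (x + 1)) / 2) t := by
        rw [walkExpect, walkExpect, walkExpect, ← Finset.sum_add_distrib]
        exact Finset.sum_congr rfl fun x _ => by ring

lemma walkExpect_one (t : ℕ) : walkExpect μ (fun _ => 1) t = μ 0 0 := by
  induction t with
  | zero => simp [walkExpect]
  | succ t ih => rw [walkExpect_succ hμ0 hμ, ← ih]; norm_num

lemma walkExpect_id (t : ℕ) : walkExpect μ (fun x => x) t = 0 := by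
  induction t with
  | zero => simp [walkExpect]
  | succ t ih => rw [walkExpect_succ hμ0 hμ, ← ih]; congr 1; ext x; push_cast; ring

lemma walkExpect_sq (t : ℕ) : walkExpect μ (fun x => (x : ℝ) ^ 2) t = t * μ 0 0 := by
  induction t with
  | zero => simp [walkExpect]
  | succ t ih =>
    have hsq : (fun x : ℤ => (((x - 1 : ℤ) : ℝ) ^ 2 + ((x + 1 : ℤ) : ℝ) ^ 2) / 2)
        = fun x : ℤ => (x : ℝ) ^ 2 + 1 := by ext x; push_cast; ring
    rw [walkExpect_succ hμ0 hμ, hsq, walkExpect_add, ih, walkExpect_one hμ0 hμ]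
    push_cast
    ring

end SymmetricWalk

lemma trace_mul_mul_conjTranspose_of_conjTranspose_mul_self {n R : Type*} [Fintype n]
    [DecidableEq n] [CommSemiring R] [StarRing R] {U : Matrix n n R} {c : R}
    (hU : Uᴴ * U = c • 1) (A : Matrix n n R) : (U * A * Uᴴ).trace = c * A.trace := by
  rw [trace_mul_cycle, hU, Matrix.smul_mul, Matrix.one_mul, trace_smul, smul_eq_mul]

lemma conjTranspose_mul_self_antidiag (c : ℝ) :
    (!![0, (c : ℂ); (c : ℂ), 0])ᴴ * !![0, (c : ℂ); (c : ℂ), 0] = ((c ^ 2 : ℝ) : ℂ) • 1 := by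
  ext i j
  fin_cases i <;> fin_cases j <;> simp [Matrix.mul_apply, sq]

section Diffusive

variable {θ0 θ1 : ℝ} (h : Real.cos θ0 = Real.sin θ0 * Real.sin θ1) (hc1 : Real.cos θ1 = 0)
include h hc1

lemma Pmat_eq_antidiag : Pmat θ0 θ1 = !![0, (Real.cos θ0 : ℂ); (Real.cos θ0 : ℂ), 0] := by
  simp [Pmat, hc1, ← h]

lemma Qmat_eq_antidiag : Qmat θ0 θ1 = !![0, (Real.cos θ0 : ℂ); (Real.cos θ0 : ℂ), 0] := by
  simp [Qmat, hc1, ← h]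

lemma cos_sq_eq_half : Real.cos θ0 ^ 2 = 1 / 2 := by
  have hs1 : Real.sin θ1 ^ 2 = 1 := by nlinarith [Real.sin_sq_add_cos_sq θ1]
  have hsq : Real.cos θ0 ^ 2 = Real.sin θ0 ^ 2 := by rw [h, mul_pow, hs1, mul_one]
  linarith [Real.sin_sq_add_cos_sq θ0]

lemma findprob_succ (p : ℝ) (t : ℕ) (x : ℤ) :
    findprob θ0 θ1 p (t + 1) x
      = (findprob θ0 θ1 p t (x + 1) + findprob θ0 θ1 p t (x - 1)) / 2 := by
  have hU := conjTranspose_mul_self_antidiag (Real.cos θ0)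
  rw [cos_sq_eq_half h hc1] at hU
  simp only [findprob, owalk, Pmat_eq_antidiag h hc1, Qmat_eq_antidiag h hc1, trace_add,
    trace_mul_mul_conjTranspose_of_conjTranspose_mul_self hU]
  rw [← mul_add, re_ofReal_mul, add_re]
  ring

end Diffusive

lemma findprob_zero_of_ne (θ0 θ1 p : ℝ) (x : ℤ) (hx : x ≠ 0) : findprob θ0 θ1 p 0 x = 0 := by
  simp [findprob, owalk, hx]

lemma findprob_zero_zero (θ0 θ1 p : ℝ) : findprob θ0 θ1 p 0 0 = 1 := by
  simp [findprob, owalk]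

theorem owalk_diffusive_c1_zero_general (θ0 θ1 p : ℝ)
    (h : Real.cos θ0 = Real.sin θ0 * Real.sin θ1) (hc1 : Real.cos θ1 = 0) :
    Filter.Tendsto (fun t : ℕ => stdDev θ0 θ1 p t / Real.sqrt t) Filter.atTop (nhds 1) := by
  have hμ0 := findprob_zero_of_ne θ0 θ1 p
  have hμ := findprob_succ h hc1 p
  have hσ (t : ℕ) : stdDev θ0 θ1 p t = Real.sqrt t := by
    change Real.sqrt (walkExpect _ (fun x => (x : ℝ) ^ 2) t - walkExpect _ (fun x => (x : ℝ)) t ^ 2)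
      = _
    rw [walkExpect_sq hμ0 hμ, walkExpect_id hμ0 hμ, findprob_zero_zero]
    norm_num
  refine tendsto_const_nhds.congr' ?_
  filter_upwards [eventually_ge_atTop 1] with t ht
  rw [hσ, div_self (by positivity)]

theorem owalk_diffusive_c1_zero (θ0 θ1 p : ℝ) (hp0 : 0 ≤ p) (hp1 : p ≤ 1)
    (h : Real.cos θ0 = Real.sin θ0 * Real.sin θ1) (hc1 : Real.cos θ1 = 0) :
    Filter.Tendsto (fun t : ℕ => stdDev θ0 θ1 p t / Real.sqrt t) Filter.atTop (nhds 1) :=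
  owalk_diffusive_c1_zero_general θ0 θ1 p h hc1
end

section
/- Suppose cos θ0 = 0 and sin θ1 = 0. Then for every time t ≥ 1 the walker is localized at the extreme positions: μ t t = p, μ t (−t) = 1 − p, and μ t x = 0 for every x ∈ ℤ with x ≠ t and x ≠ −t. -/
open Matrix Complex Filter

/-! When `cos θ0 = 0` and `sin θ1 = 0`, `P = diag(0, -a)` and `Q = diag(a, 0)` with `a² = 1`.
Conjugation by them keeps only one diagonal entry, unchanged, so the spin-up mass `p` moves
deterministically one step right and the spin-down mass `1 - p` one step left: the state at `(t, x)`
is `diag(p·[x = t], (1 - p)·[x = -t])`, which already holds at `t = 0`. -/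

lemma Matrix.diagonal_mul_diagonal_mul_conjTranspose {n R : Type*} [Fintype n] [DecidableEq n]
    [CommSemiring R] [StarRing R] (d e : n → R) :
    diagonal d * diagonal e * (diagonal d)ᴴ = diagonal fun i => d i * e i * star (d i) := by
  rw [diagonal_conjTranspose, diagonal_mul_diagonal, diagonal_mul_diagonal]
  rfl

lemma Complex.ofReal_mul_mul_star_ofReal_of_sq_eq_one {a : ℝ} (ha : a ^ 2 = 1) (z : ℂ) :
    (a : ℂ) * z * star (a : ℂ) = z := by
  have ha' : (a : ℂ) ^ 2 = 1 := by exact_mod_cast ha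
  rw [star_def, conj_ofReal]
  linear_combination z * ha'

section Localized

variable {θ0 θ1 : ℝ}

lemma exists_Pmat_Qmat_eq_diagonal (hc0 : Real.cos θ0 = 0) (hs1 : Real.sin θ1 = 0) :
    ∃ a : ℝ, a ^ 2 = 1 ∧ Pmat θ0 θ1 = diagonal ![0, -(a : ℂ)] ∧
      Qmat θ0 θ1 = diagonal ![(a : ℂ), 0] := by
  refine ⟨Real.sin θ0 * Real.cos θ1, ?_, ?_, ?_⟩
  · have h0 := Real.sin_sq_add_cos_sq θ0
    have h1 := Real.sin_sq_add_cos_sq θ1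
    rw [hc0] at h0
    rw [hs1] at h1
    linear_combination (Real.cos θ1 ^ 2) * h0 + h1
  all_goals ext i j; fin_cases i <;> fin_cases j <;> simp [Pmat, Qmat, hc0, hs1]

lemma owalk_eq_diagonal (hc0 : Real.cos θ0 = 0) (hs1 : Real.sin θ1 = 0) (p : ℝ) (t : ℕ) (x : ℤ) :
    owalk θ0 θ1 p t x = diagonal ![((if x = t then p else 0 : ℝ) : ℂ),
      ((if x = -t then 1 - p else 0 : ℝ) : ℂ)] := by
  obtain ⟨a, ha, hP, hQ⟩ := exists_Pmat_Qmat_eq_diagonal hc0 hs1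
  induction t generalizing x with
  | zero =>
    rw [owalk]
    split_ifs <;> simp_all [← diagonal_zero]
  | succ t ih =>
    rw [owalk, ih, ih, hP, hQ, diagonal_mul_diagonal_mul_conjTranspose,
      diagonal_mul_diagonal_mul_conjTranspose, diagonal_add]
    congr 1
    ext i
    fin_cases i <;>
      simp only [Fin.zero_eta, Fin.mk_one, cons_val_zero, cons_val_one, cons_val_fin_one, neg_mul,
        mul_neg, star_neg, neg_neg, zero_mul, mul_zero, star_zero, zero_add, add_zero,
        ofReal_mul_mul_star_ofReal_of_sq_eq_one ha] <;>
      split_ifs <;> first | rfl | omega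

lemma findprob_eq (hc0 : Real.cos θ0 = 0) (hs1 : Real.sin θ1 = 0) (p : ℝ) (t : ℕ) (x : ℤ) :
    findprob θ0 θ1 p t x = (if x = t then p else 0) + if x = -t then 1 - p else 0 := by
  simp [findprob, owalk_eq_diagonal hc0 hs1]

end Localized

theorem owalk_localized_at_extremes_general (θ0 θ1 p : ℝ)
    (hc0 : Real.cos θ0 = 0) (hs1 : Real.sin θ1 = 0) :
    ∀ t : ℕ, 1 ≤ t →
      findprob θ0 θ1 p t (t : ℤ) = p ∧
      findprob θ0 θ1 p t (-(t : ℤ)) = 1 - p ∧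
      ∀ x : ℤ, x ≠ (t : ℤ) → x ≠ -(t : ℤ) → findprob θ0 θ1 p t x = 0 := by
  intro t ht
  have ht_ne_neg : (t : ℤ) ≠ -t := by omega
  simp only [findprob_eq hc0 hs1]
  refine ⟨by simp [ht_ne_neg], by simp [ht_ne_neg.symm], fun x hx hx' => by simp [hx, hx']⟩

theorem owalk_localized_at_extremes (θ0 θ1 p : ℝ) (hp0 : 0 ≤ p) (hp1 : p ≤ 1)
    (hc0 : Real.cos θ0 = 0) (hs1 : Real.sin θ1 = 0) :
    ∀ t : ℕ, 1 ≤ t →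
      findprob θ0 θ1 p t (t : ℤ) = p ∧
      findprob θ0 θ1 p t (-(t : ℤ)) = 1 - p ∧
      ∀ x : ℤ, x ≠ (t : ℤ) → x ≠ -(t : ℤ) → findprob θ0 θ1 p t x = 0 :=
  owalk_localized_at_extremes_general θ0 θ1 p hc0 hs1
end

section
/- Suppose cos θ0 = 0, sin θ1 ≠ 0 and cos θ1 ≠ 0. Then the first moment E₁(t) converges, as t → ∞, to (2p − 1)·(1 − 2·s1²)/(2·s1²), where s1 = sin θ1. -/
open Matrix Complex Filter

/-!
When `cos θ0 = 0` the operations `P` and `Q` send diagonal states to diagonal states, so the walk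
is a classical correlated random walk: the chirality `0` steps right and the chirality `1` steps
left, each keeping its chirality with probability `cos² θ1` and switching with probability
`sin² θ1`. For such a walk the total imbalance between the two chiralities is multiplied by
`r = cos² θ1 - sin² θ1` at every step, and each step adds the new imbalance to the first moment.
Hence the first moment is `(2p - 1) (r + r² + ⋯ + rᵗ)`, a geometric series with `|r| < 1`.
-/

open Finset

theorem sum_Icc_comp_add_of_eq_zero {M : Type*} [AddCommMonoid M] {f : ℤ → M} {t : ℕ}
    (hf : ∀ x, (t : ℤ) < |x| → f x = 0) {n c : ℤ} (hn : (t : ℤ) + |c| ≤ n) :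
    ∑ x ∈ Icc (-n) n, f (x + c) = ∑ x ∈ Icc (-(t : ℤ)) t, f x := by
  have reindex : ∑ x ∈ Icc (-n) n, f (x + c) = ∑ y ∈ Icc (-n + c) (n + c), f y := by
    rw [← map_add_right_Icc, sum_map]
    rfl
  have hc := abs_le.mp (le_refl |c|)
  rw [reindex]
  refine (sum_subset (Icc_subset_Icc (by omega) (by omega)) fun x _ hx => hf x ?_).symm
  rw [mem_Icc] at hx
  rw [lt_abs]
  omega

theorem sum_Icc_succ_comp_sub_one {M : Type*} [AddCommMonoid M] {f : ℤ → M} {t : ℕ}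
    (hf : ∀ x, (t : ℤ) < |x| → f x = 0) :
    ∑ x ∈ Icc (-(t + 1 : ℤ)) (t + 1), f (x - 1) = ∑ x ∈ Icc (-(t : ℤ)) t, f x := by
  simpa only [← sub_eq_add_neg] using sum_Icc_comp_add_of_eq_zero hf (c := -1) (by simp)

theorem sum_Icc_succ_comp_add_one {M : Type*} [AddCommMonoid M] {f : ℤ → M} {t : ℕ}
    (hf : ∀ x, (t : ℤ) < |x| → f x = 0) :
    ∑ x ∈ Icc (-(t + 1 : ℤ)) (t + 1), f (x + 1) = ∑ x ∈ Icc (-(t : ℤ)) t, f x :=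
  sum_Icc_comp_add_of_eq_zero hf (by simp)

theorem tendsto_sum_range_pow_succ {r : ℝ} (hr : |r| < 1) :
    Tendsto (fun t => ∑ k ∈ range t, r ^ (k + 1)) atTop (nhds (r / (1 - r))) := by
  simpa only [pow_succ', ← mul_sum, div_eq_mul_inv] using
    ((hasSum_geometric_of_abs_lt_one hr).mul_left r).tendsto_sum_nat

theorem abs_cos_sq_sub_sin_sq_lt_one {θ : ℝ} (hs : Real.sin θ ≠ 0) (hc : Real.cos θ ≠ 0) :
    |Real.cos θ ^ 2 - Real.sin θ ^ 2| < 1 := by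
  have := Real.cos_sq_add_sin_sq θ
  have : 0 < Real.sin θ ^ 2 := by positivity
  have : 0 < Real.cos θ ^ 2 := by positivity
  exact abs_lt.mpr ⟨by linarith, by linarith⟩

structure IsCorrelatedWalk {R : Type*} [CommRing R] (α β : R) (a b : ℕ → ℤ → R) : Prop where
  eq_zero_of_ne_zero : ∀ x ≠ 0, a 0 x = 0 ∧ b 0 x = 0
  right_succ : ∀ t x, a (t + 1) x = α * a t (x - 1) + β * b t (x - 1)
  left_succ : ∀ t x, b (t + 1) x = β * a t (x + 1) + α * b t (x + 1)

namespace IsCorrelatedWalk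

variable {R : Type*} [CommRing R] {α β : R} {a b : ℕ → ℤ → R}

noncomputable def imbalance (a b : ℕ → ℤ → R) (t : ℕ) : R :=
  ∑ x ∈ Icc (-(t : ℤ)) t, (a t x - b t x)

noncomputable def firstMoment (a b : ℕ → ℤ → R) (t : ℕ) : R :=
  ∑ x ∈ Icc (-(t : ℤ)) t, (x : R) * (a t x + b t x)

theorem eq_zero_of_lt_abs (h : IsCorrelatedWalk α β a b) :
    ∀ (t : ℕ) (x : ℤ), (t : ℤ) < |x| → a t x = 0 ∧ b t x = 0 := by
  intro t
  induction t with
  | zero => exact fun x hx => h.eq_zero_of_ne_zero x (abs_pos.mp hx)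
  | succ t ih =>
    intro x hx
    rw [lt_abs] at hx
    obtain ⟨hal, hbl⟩ := ih (x - 1) (by rw [lt_abs]; push_cast at hx; omega)
    obtain ⟨har, hbr⟩ := ih (x + 1) (by rw [lt_abs]; push_cast at hx; omega)
    simp [h.right_succ, h.left_succ, hal, hbl, har, hbr]

theorem apply_eq_zero_of_lt_abs (h : IsCorrelatedWalk α β a b) {f : ℤ → R → R → R}
    (hf : ∀ x, f x 0 0 = 0) (t : ℕ) (x : ℤ) (hx : (t : ℤ) < |x|) : f x (a t x) (b t x) = 0 := by
  rw [(h.eq_zero_of_lt_abs t x hx).1, (h.eq_zero_of_lt_abs t x hx).2, hf]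

theorem imbalance_succ (h : IsCorrelatedWalk α β a b) (t : ℕ) :
    imbalance a b (t + 1) = (α - β) * imbalance a b t := by
  calc imbalance a b (t + 1)
      = ∑ x ∈ Icc (-(t + 1 : ℤ)) (t + 1), (α * a t (x - 1) + β * b t (x - 1))
        - ∑ x ∈ Icc (-(t + 1 : ℤ)) (t + 1), (β * a t (x + 1) + α * b t (x + 1)) := by
        simp only [imbalance, h.right_succ, h.left_succ, sum_sub_distrib]
        push_cast
        rfl
    _ = ∑ x ∈ Icc (-(t : ℤ)) t, (α * a t x + β * b t x)
        - ∑ x ∈ Icc (-(t : ℤ)) t, (β * a t x + α * b t x) := by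
        rw [sum_Icc_succ_comp_sub_one
            (h.apply_eq_zero_of_lt_abs (f := fun _ u v => α * u + β * v) (by simp) t),
          sum_Icc_succ_comp_add_one
            (h.apply_eq_zero_of_lt_abs (f := fun _ u v => β * u + α * v) (by simp) t)]
    _ = (α - β) * imbalance a b t := by
        rw [imbalance, mul_sum, ← sum_sub_distrib]
        exact sum_congr rfl fun x _ => by ring

theorem firstMoment_succ (h : IsCorrelatedWalk α β a b) (t : ℕ) :
    firstMoment a b (t + 1) = (α + β) * firstMoment a b t + (α - β) * imbalance a b t := by
  calc firstMoment a b (t + 1)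
      = ∑ x ∈ Icc (-(t + 1 : ℤ)) (t + 1),
          ((↑(x - 1) : R) + 1) * (α * a t (x - 1) + β * b t (x - 1))
        + ∑ x ∈ Icc (-(t + 1 : ℤ)) (t + 1),
          ((↑(x + 1) : R) - 1) * (β * a t (x + 1) + α * b t (x + 1)) := by
        rw [firstMoment, ← sum_add_distrib]
        push_cast
        refine sum_congr rfl fun x _ => ?_
        rw [h.right_succ, h.left_succ]
        ring
    _ = ∑ x ∈ Icc (-(t : ℤ)) t, ((x : R) + 1) * (α * a t x + β * b t x)
        + ∑ x ∈ Icc (-(t : ℤ)) t, ((x : R) - 1) * (β * a t x + α * b t x) := by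
        rw [sum_Icc_succ_comp_sub_one
            (h.apply_eq_zero_of_lt_abs (f := fun x u v => ((x : R) + 1) * (α * u + β * v))
              (by simp) t),
          sum_Icc_succ_comp_add_one
            (h.apply_eq_zero_of_lt_abs (f := fun x u v => ((x : R) - 1) * (β * u + α * v))
              (by simp) t)]
    _ = (α + β) * firstMoment a b t + (α - β) * imbalance a b t := by
        rw [firstMoment, imbalance, mul_sum, mul_sum, ← sum_add_distrib, ← sum_add_distrib]
        exact sum_congr rfl fun x _ => by ring

theorem imbalance_eq_pow_mul (h : IsCorrelatedWalk α β a b) (t : ℕ) :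
    imbalance a b t = (α - β) ^ t * imbalance a b 0 := by
  induction t with
  | zero => rw [pow_zero, one_mul]
  | succ t ih => rw [h.imbalance_succ, ih, pow_succ', mul_assoc]

theorem firstMoment_eq_mul_sum (h : IsCorrelatedWalk α β a b) (hαβ : α + β = 1) (t : ℕ) :
    firstMoment a b t = imbalance a b 0 * ∑ k ∈ range t, (α - β) ^ (k + 1) := by
  induction t with
  | zero => simp [firstMoment]
  | succ t ih =>
    rw [h.firstMoment_succ, hαβ, ih, h.imbalance_eq_pow_mul t, sum_range_succ]
    ring

theorem tendsto_firstMoment {a b : ℕ → ℤ → ℝ} {α β : ℝ} (h : IsCorrelatedWalk α β a b)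
    (hαβ : α + β = 1) (hr : |α - β| < 1) :
    Tendsto (firstMoment a b) atTop (nhds (imbalance a b 0 * ((α - β) / (1 - (α - β))))) :=
  ((tendsto_sum_range_pow_succ hr).const_mul _).congr fun t =>
    (h.firstMoment_eq_mul_sum hαβ t).symm

end IsCorrelatedWalk

theorem re_mul_mul_conjTranspose_apply_self {M A : Matrix (Fin 2) (Fin 2) ℂ}
    (h01 : A 0 1 = 0) (h10 : A 1 0 = 0) (i : Fin 2) :
    ((M * A * Mᴴ) i i).re = Complex.normSq (M i 0) * (A 0 0).re
      + Complex.normSq (M i 1) * (A 1 1).re := by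
  have hconj : (M * A * Mᴴ) i i
      = Complex.normSq (M i 0) * A 0 0 + Complex.normSq (M i 1) * A 1 1 := by
    simp only [Matrix.mul_apply, Fin.sum_univ_two, conjTranspose_apply, RCLike.star_def, h01, h10]
    linear_combination A 0 0 * Complex.mul_conj (M i 0) + A 1 1 * Complex.mul_conj (M i 1)
  rw [hconj, Complex.add_re, Complex.re_ofReal_mul, Complex.re_ofReal_mul]

noncomputable def owalkDiag (θ0 θ1 p : ℝ) (i : Fin 2) (t : ℕ) (x : ℤ) : ℝ :=
  (owalk θ0 θ1 p t x i i).re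

section CosZero

variable {θ0 : ℝ} (θ1 p : ℝ)

theorem owalk_offDiag_eq_zero (hc0 : Real.cos θ0 = 0) (t : ℕ) (x : ℤ) :
    owalk θ0 θ1 p t x 0 1 = 0 ∧ owalk θ0 θ1 p t x 1 0 = 0 := by
  cases t with
  | zero => by_cases hx : x = 0 <;> simp [owalk, hx]
  | succ t =>
    simp [owalk, Pmat, Qmat, Matrix.mul_apply, Fin.sum_univ_two, Matrix.conjTranspose_apply,
      Matrix.vecMul, dotProduct, Complex.conj_ofReal, hc0, -Complex.ofReal_sin, -Complex.ofReal_cos]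

theorem owalkDiag_zero_succ (hc0 : Real.cos θ0 = 0) (t : ℕ) (x : ℤ) :
    owalkDiag θ0 θ1 p 0 (t + 1) x = Real.cos θ1 ^ 2 * owalkDiag θ0 θ1 p 0 t (x - 1)
      + Real.sin θ1 ^ 2 * owalkDiag θ0 θ1 p 1 t (x - 1) := by
  have hs0 : Real.sin θ0 ^ 2 = 1 := by nlinarith [Real.sin_sq_add_cos_sq θ0]
  obtain ⟨h01, h10⟩ := owalk_offDiag_eq_zero θ1 p hc0 t (x - 1)
  obtain ⟨h01', h10'⟩ := owalk_offDiag_eq_zero θ1 p hc0 t (x + 1)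
  rw [owalkDiag, owalk, Matrix.add_apply, Complex.add_re,
    re_mul_mul_conjTranspose_apply_self h01' h10', re_mul_mul_conjTranspose_apply_self h01 h10]
  simp only [Pmat, Qmat, of_apply, cons_val', cons_val_zero, cons_val_one, cons_val_fin_one, hc0,
    Complex.ofReal_zero, map_zero, zero_mul, zero_add, Complex.normSq_ofReal, owalkDiag]
  linear_combination (Real.cos θ1 ^ 2 * (owalk θ0 θ1 p t (x - 1) 0 0).re
    + Real.sin θ1 ^ 2 * (owalk θ0 θ1 p t (x - 1) 1 1).re) * hs0

theorem owalkDiag_one_succ (hc0 : Real.cos θ0 = 0) (t : ℕ) (x : ℤ) :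
    owalkDiag θ0 θ1 p 1 (t + 1) x = Real.sin θ1 ^ 2 * owalkDiag θ0 θ1 p 0 t (x + 1)
      + Real.cos θ1 ^ 2 * owalkDiag θ0 θ1 p 1 t (x + 1) := by
  have hs0 : Real.sin θ0 ^ 2 = 1 := by nlinarith [Real.sin_sq_add_cos_sq θ0]
  obtain ⟨h01, h10⟩ := owalk_offDiag_eq_zero θ1 p hc0 t (x - 1)
  obtain ⟨h01', h10'⟩ := owalk_offDiag_eq_zero θ1 p hc0 t (x + 1)
  rw [owalkDiag, owalk, Matrix.add_apply, Complex.add_re,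
    re_mul_mul_conjTranspose_apply_self h01' h10', re_mul_mul_conjTranspose_apply_self h01 h10]
  simp only [Pmat, Qmat, of_apply, cons_val', cons_val_zero, cons_val_one, cons_val_fin_one, hc0,
    Complex.ofReal_zero, map_zero, zero_mul, add_zero, Complex.normSq_neg, Complex.normSq_ofReal,
    owalkDiag]
  linear_combination (Real.sin θ1 ^ 2 * (owalk θ0 θ1 p t (x + 1) 0 0).re
    + Real.cos θ1 ^ 2 * (owalk θ0 θ1 p t (x + 1) 1 1).re) * hs0

theorem isCorrelatedWalk_owalkDiag (hc0 : Real.cos θ0 = 0) :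
    IsCorrelatedWalk (Real.cos θ1 ^ 2) (Real.sin θ1 ^ 2)
      (owalkDiag θ0 θ1 p 0) (owalkDiag θ0 θ1 p 1) where
  eq_zero_of_ne_zero x hx := by simp [owalkDiag, owalk, hx]
  right_succ := owalkDiag_zero_succ θ1 p hc0
  left_succ := owalkDiag_one_succ θ1 p hc0

end CosZero

theorem moment1_eq_firstMoment (θ0 θ1 p : ℝ) :
    moment1 θ0 θ1 p =
      IsCorrelatedWalk.firstMoment (owalkDiag θ0 θ1 p 0) (owalkDiag θ0 θ1 p 1) := by
  ext t
  simp [moment1, IsCorrelatedWalk.firstMoment, findprob, owalkDiag, Matrix.trace_fin_two]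

theorem imbalance_owalkDiag_zero (θ0 θ1 p : ℝ) :
    IsCorrelatedWalk.imbalance (owalkDiag θ0 θ1 p 0) (owalkDiag θ0 θ1 p 1) 0 = 2 * p - 1 := by
  simp only [IsCorrelatedWalk.imbalance, Nat.cast_zero, neg_zero, Icc_self, sum_singleton,
    owalkDiag, owalk, if_pos, diagonal_apply_eq, cons_val_zero, cons_val_one, cons_val_fin_one,
    Complex.ofReal_re]
  ring

theorem owalk_moment1_limit_c0_zero_general (θ0 θ1 p : ℝ)
    (hc0 : Real.cos θ0 = 0) (hs1 : Real.sin θ1 ≠ 0) (hc1 : Real.cos θ1 ≠ 0) :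
    Filter.Tendsto (fun t : ℕ => moment1 θ0 θ1 p t) Filter.atTop
      (nhds ((2 * p - 1) * (1 - 2 * Real.sin θ1 ^ 2) / (2 * Real.sin θ1 ^ 2))) := by
  have hpyth : Real.cos θ1 ^ 2 + Real.sin θ1 ^ 2 = 1 := Real.cos_sq_add_sin_sq θ1
  have hlim := (isCorrelatedWalk_owalkDiag θ1 p hc0).tendsto_firstMoment hpyth
    (abs_cos_sq_sub_sin_sq_lt_one hs1 hc1)
  rw [← moment1_eq_firstMoment, imbalance_owalkDiag_zero] at hlim
  convert hlim using 2
  rw [show Real.cos θ1 ^ 2 - Real.sin θ1 ^ 2 = 1 - 2 * Real.sin θ1 ^ 2 by linarith,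
    sub_sub_cancel, mul_div_assoc]

theorem owalk_moment1_limit_c0_zero (θ0 θ1 p : ℝ) (hp0 : 0 ≤ p) (hp1 : p ≤ 1)
    (hc0 : Real.cos θ0 = 0) (hs1 : Real.sin θ1 ≠ 0) (hc1 : Real.cos θ1 ≠ 0) :
    Filter.Tendsto (fun t : ℕ => moment1 θ0 θ1 p t) Filter.atTop
      (nhds ((2 * p - 1) * (1 - 2 * Real.sin θ1 ^ 2) / (2 * Real.sin θ1 ^ 2))) :=
  owalk_moment1_limit_c0_zero_general θ0 θ1 p hc0 hs1 hc1
end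

section
/- Suppose cos θ0 = 0, sin θ1 ≠ 0 and cos θ1 ≠ 0. Then the sequence E₂(t) − (c1²/s1²)·t converges, as t → ∞, to −(1 − 2·s1²)/(2·s1⁴), where c1 = cos θ1 and s1 = sin θ1. -/
open Matrix Complex Filter

/-! When `cos θ0 = 0`, `P` and `Q` each have a single nonzero row, so diagonal states stay
diagonal and the open quantum walk is the classical correlated random walk that keeps its
direction with probability `c = cos² θ1` and reverses it with probability `s = sin² θ1`.
With `a`, `b` its right- and left-moving masses, the total mass stays `1`, while
`D t = ∑ x (a - b)` and `E t = ∑ x² (a + b)` satisfy `D (t+1) = (c - s) D t + 1` and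
`E (t+1) = E t + 2 (c - s) D t + 1`. Solving, `E t = (c/s) t - (c - s)(1 - (c - s)^t) / (2 s²)`,
and the geometric term dies out because `|c - s| < 1` when `c, s > 0`. -/

theorem Finset.sum_Icc_comp_add_of_support {M : Type*} [AddCommMonoid M] {F : ℤ → M}
    {a b a' b' k : ℤ} (hF : ∀ y ∉ Finset.Icc a' b', F y = 0) (ha : a + k ≤ a') (hb : b' ≤ b + k) :
    ∑ x ∈ Finset.Icc a b, F (x + k) = ∑ y ∈ Finset.Icc a' b', F y := by
  rw [Finset.sum_subset (Finset.Icc_subset_Icc ha hb) fun y _ hy => hF y hy,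
    ← Finset.map_add_right_Icc, Finset.sum_map]
  rfl

/-- The correlated random walk: `(crw c s p t x).1` and `(crw c s p t x).2` are the masses at `x`
that last moved right and left; a step keeps its direction with weight `c` and reverses it with
weight `s`. -/
noncomputable def crw (c s p : ℝ) : ℕ → ℤ → ℝ × ℝ
  | 0, x => if x = 0 then (p, 1 - p) else (0, 0)
  | t + 1, x =>
      (c * (crw c s p t (x - 1)).1 + s * (crw c s p t (x - 1)).2,
       s * (crw c s p t (x + 1)).1 + c * (crw c s p t (x + 1)).2)

noncomputable def crwPairing (c s p : ℝ) (t : ℕ) (f g : ℤ → ℝ) : ℝ :=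
  ∑ x ∈ Finset.Icc (-(t : ℤ)) t, (f x * (crw c s p t x).1 + g x * (crw c s p t x).2)

open Topology

section CorrelatedWalk

variable {c s : ℝ} (p : ℝ)

theorem crw_eq_zero_of_notMem (t : ℕ) {x : ℤ} (hx : x ∉ Finset.Icc (-(t : ℤ)) t) :
    crw c s p t x = 0 := by
  induction t generalizing x with
  | zero => simp_all [crw]
  | succ t ih =>
    simp only [Finset.mem_Icc, not_and_or, not_le] at hx
    rw [crw, ih (by simp only [Finset.mem_Icc]; omega), ih (by simp only [Finset.mem_Icc]; omega)]
    simp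

/-- Stepping the walk forward is dual to stepping the observables backward, which turns each
moment into a linear combination of lower moments at the previous time. -/
theorem crwPairing_succ (t : ℕ) (f g : ℤ → ℝ) :
    crwPairing c s p (t + 1) f g =
      crwPairing c s p t (fun y => c * f (y + 1) + s * g (y - 1))
        (fun y => s * f (y + 1) + c * g (y - 1)) := by
  set R : ℤ → ℝ := fun y => f (y + 1) * (c * (crw c s p t y).1 + s * (crw c s p t y).2)
  set L : ℤ → ℝ := fun y => g (y - 1) * (s * (crw c s p t y).1 + c * (crw c s p t y).2)
  have hR : ∀ y ∉ Finset.Icc (-(t : ℤ)) t, R y = 0 := fun y hy => by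
    simp [R, crw_eq_zero_of_notMem p t hy]
  have hL : ∀ y ∉ Finset.Icc (-(t : ℤ)) t, L y = 0 := fun y hy => by
    simp [L, crw_eq_zero_of_notMem p t hy]
  calc crwPairing c s p (t + 1) f g
      = ∑ x ∈ Finset.Icc (-((t + 1 : ℕ) : ℤ)) (t + 1 : ℕ), (R (x + -1) + L (x + 1)) := by
        refine Finset.sum_congr rfl fun x _ => ?_
        simp [crw, R, L, sub_eq_add_neg]
    _ = ∑ y ∈ Finset.Icc (-(t : ℤ)) t, R y + ∑ y ∈ Finset.Icc (-(t : ℤ)) t, L y := by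
        rw [Finset.sum_add_distrib,
          Finset.sum_Icc_comp_add_of_support hR (by push_cast; omega) (by push_cast; omega),
          Finset.sum_Icc_comp_add_of_support hL (by push_cast; omega) (by push_cast; omega)]
    _ = _ := by
        rw [crwPairing, ← Finset.sum_add_distrib]
        exact Finset.sum_congr rfl fun y _ => by ring

theorem crwPairing_const_one (t : ℕ) :
    crwPairing c s p t (fun _ => 1) (fun _ => 1) = (c + s) ^ t := by
  induction t with
  | zero => simp [crwPairing, crw]
  | succ t ih =>
    rw [crwPairing_succ, pow_succ, ← ih]
    simp only [crwPairing, Finset.sum_mul]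
    exact Finset.sum_congr rfl fun _ _ => by ring

theorem crwPairing_id_succ (t : ℕ) :
    crwPairing c s p (t + 1) (fun x => x) (fun x => -x) =
      (c - s) * crwPairing c s p t (fun x => x) (fun x => -x)
        + (c + s) * crwPairing c s p t (fun _ => 1) (fun _ => 1) := by
  rw [crwPairing_succ]
  simp only [crwPairing, Finset.mul_sum, ← Finset.sum_add_distrib]
  exact Finset.sum_congr rfl fun _ _ => by push_cast; ring

theorem crwPairing_sq_succ (t : ℕ) :
    crwPairing c s p (t + 1) (fun x => x ^ 2) (fun x => x ^ 2) =
      (c + s) * crwPairing c s p t (fun x => x ^ 2) (fun x => x ^ 2)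
        + 2 * (c - s) * crwPairing c s p t (fun x => x) (fun x => -x)
        + (c + s) * crwPairing c s p t (fun _ => 1) (fun _ => 1) := by
  rw [crwPairing_succ]
  simp only [crwPairing, Finset.mul_sum, ← Finset.sum_add_distrib]
  exact Finset.sum_congr rfl fun _ _ => by push_cast; ring

theorem crwPairing_id_eq (hcs : c + s = 1) (hs : s ≠ 0) (t : ℕ) :
    crwPairing c s p t (fun x => x) (fun x => -x) = (1 - (c - s) ^ t) / (2 * s) := by
  obtain rfl : c = 1 - s := eq_sub_of_add_eq hcs
  induction t with
  | zero => simp [crwPairing, crw]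
  | succ t ih =>
    rw [crwPairing_id_succ, ih, crwPairing_const_one, hcs, one_pow, pow_succ]
    field_simp
    ring

theorem crwPairing_sq_eq (hcs : c + s = 1) (hs : s ≠ 0) (t : ℕ) :
    crwPairing c s p t (fun x => x ^ 2) (fun x => x ^ 2) =
      c / s * t - (c - s) * (1 - (c - s) ^ t) / (2 * s ^ 2) := by
  induction t with
  | zero => simp [crwPairing, crw]
  | succ t ih =>
    rw [crwPairing_sq_succ, ih, crwPairing_id_eq p hcs hs, crwPairing_const_one, hcs, one_pow, pow_succ]
    obtain rfl : c = 1 - s := eq_sub_of_add_eq hcs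
    field_simp
    push_cast
    ring

theorem tendsto_crwPairing_sq_sub (hc : 0 < c) (hs : 0 < s) (hcs : c + s = 1) :
    Tendsto (fun t : ℕ => crwPairing c s p t (fun x => x ^ 2) (fun x => x ^ 2) - c / s * t)
      atTop (𝓝 (-((c - s) / (2 * s ^ 2)))) := by
  have hq : |c - s| < 1 := abs_lt.2 ⟨by linarith, by linarith⟩
  have hlim := ((tendsto_pow_atTop_nhds_zero_of_abs_lt_one hq).const_mul
    ((c - s) / (2 * s ^ 2))).const_add (-((c - s) / (2 * s ^ 2)))
  rw [mul_zero, add_zero] at hlim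
  refine hlim.congr fun t => ?_
  rw [crwPairing_sq_eq p hcs hs.ne']
  ring

end CorrelatedWalk

theorem lowerRow_mul_diagonal_mul_conjTranspose (u v a b : ℝ) :
    !![0, 0; (u : ℂ), v] * diagonal ![(a : ℂ), b] * (!![0, 0; (u : ℂ), v])ᴴ
      = diagonal ![0, ((u ^ 2 * a + v ^ 2 * b : ℝ) : ℂ)] := by
  ext i j
  fin_cases i <;> fin_cases j <;> simp [Matrix.mul_apply, Fin.sum_univ_two, Matrix.vecMul_diagonal]
  ring

theorem upperRow_mul_diagonal_mul_conjTranspose (u v a b : ℝ) :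
    !![(u : ℂ), v; 0, 0] * diagonal ![(a : ℂ), b] * (!![(u : ℂ), v; 0, 0])ᴴ
      = diagonal ![((u ^ 2 * a + v ^ 2 * b : ℝ) : ℂ), 0] := by
  ext i j
  fin_cases i <;> fin_cases j <;> simp [Matrix.mul_apply, Fin.sum_univ_two, Matrix.vecMul_diagonal]
  ring

section CosZero

variable {θ0 : ℝ} (θ1 p : ℝ)

theorem owalk_eq_diagonal_crw (hc0 : Real.cos θ0 = 0) (t : ℕ) (x : ℤ) :
    owalk θ0 θ1 p t x = diagonal
      ![((crw (Real.cos θ1 ^ 2) (Real.sin θ1 ^ 2) p t x).1 : ℂ),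
        (crw (Real.cos θ1 ^ 2) (Real.sin θ1 ^ 2) p t x).2] := by
  have hsin : Real.sin θ0 ^ 2 = 1 := by nlinarith [Real.sin_sq_add_cos_sq θ0]
  have hP : Pmat θ0 θ1 = !![0, 0; ((Real.sin θ0 * Real.sin θ1 : ℝ) : ℂ),
      ((-(Real.sin θ0 * Real.cos θ1) : ℝ) : ℂ)] := by
    simp [Pmat, hc0]
  have hQ : Qmat θ0 θ1 = !![((Real.sin θ0 * Real.cos θ1 : ℝ) : ℂ),
      ((Real.sin θ0 * Real.sin θ1 : ℝ) : ℂ); 0, 0] := by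
    simp [Qmat, hc0]
  induction t generalizing x with
  | zero =>
    by_cases hx : x = 0 <;> simp [owalk, crw, hx, ← Matrix.zero_empty, Matrix.cons_zero_zero]
  | succ t ih =>
    rw [owalk, ih, ih, hP, hQ, lowerRow_mul_diagonal_mul_conjTranspose,
      upperRow_mul_diagonal_mul_conjTranspose, diagonal_add]
    simp only [mul_pow, neg_sq, hsin, one_mul]
    congr 1
    ext i
    fin_cases i <;> simp [crw]

theorem moment2_eq_crwPairing (hc0 : Real.cos θ0 = 0) (t : ℕ) :
    moment2 θ0 θ1 p t = crwPairing (Real.cos θ1 ^ 2) (Real.sin θ1 ^ 2) p t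
      (fun x => x ^ 2) (fun x => x ^ 2) := by
  refine Finset.sum_congr rfl fun x _ => ?_
  simp [findprob, owalk_eq_diagonal_crw θ1 p hc0, trace_diagonal, Fin.sum_univ_two, mul_add]

end CosZero

theorem owalk_moment2_asymp_c0_zero_general (θ0 θ1 p : ℝ)
    (hc0 : Real.cos θ0 = 0) (hs1 : Real.sin θ1 ≠ 0) (hc1 : Real.cos θ1 ≠ 0) :
    Filter.Tendsto
      (fun t : ℕ => moment2 θ0 θ1 p t - Real.cos θ1 ^ 2 / Real.sin θ1 ^ 2 * t)
      Filter.atTop (nhds (-((1 - 2 * Real.sin θ1 ^ 2) / (2 * Real.sin θ1 ^ 4)))) := by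
  have hlim := tendsto_crwPairing_sq_sub p (by positivity) (by positivity)
    (Real.cos_sq_add_sin_sq θ1)
  have hval : Real.cos θ1 ^ 2 - Real.sin θ1 ^ 2 = 1 - 2 * Real.sin θ1 ^ 2 := by
    rw [Real.cos_sq']; ring
  rw [hval, ← pow_mul] at hlim
  simpa only [moment2_eq_crwPairing θ1 p hc0] using hlim

theorem owalk_moment2_asymp_c0_zero (θ0 θ1 p : ℝ) (hp0 : 0 ≤ p) (hp1 : p ≤ 1)
    (hc0 : Real.cos θ0 = 0) (hs1 : Real.sin θ1 ≠ 0) (hc1 : Real.cos θ1 ≠ 0) :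
    Filter.Tendsto
      (fun t : ℕ => moment2 θ0 θ1 p t - Real.cos θ1 ^ 2 / Real.sin θ1 ^ 2 * t)
      Filter.atTop (nhds (-((1 - 2 * Real.sin θ1 ^ 2) / (2 * Real.sin θ1 ^ 4)))) :=
  owalk_moment2_asymp_c0_zero_general θ0 θ1 p hc0 hs1 hc1
end

section
/- Suppose cos θ0 ≠ sin θ0 · sin θ1, sin θ0 · cos θ1 ≠ 0, and cos θ0 ≠ 0. Then the first moment of the open quantum walk stays bounded in time: there exists a constant C such that |E₁(t)| ≤ C for all t ∈ ℕ. -/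
open Matrix Complex Filter

/-! The total state `T t = ∑ x, owalk t x` evolves under the trace-preserving channel
`Φ M = P M Pᴴ + Q M Qᴴ`, and `X t = ∑ x, x • owalk t x` satisfies
`X (t + 1) = Φ (X t) + Q (T t) Qᴴ - P (T t) Pᴴ`. Taking traces, `E₁` grows at each step by a
linear functional of the Bloch coordinates `w t = (z, x)` of `T t`, and these obey a closed linear
recursion `w (t + 1) = A w t`. Since `T t` is a density matrix, `w` is bounded; since
`det (1 - A) = 2 (cos θ0 - sin θ0 sin θ1) ^ 2 ≠ 0`, the partial sums
`∑ s < t, w s = (1 - A)⁻¹ (w 0 - w t)` are bounded as well, and so is `E₁`. -/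

open Finset
open scoped ComplexOrder

theorem isBounded_range_sum_range_of_mulVec_succ {n : Type*} [Fintype n] [DecidableEq n]
    {A : Matrix n n ℝ} (hA : IsUnit (1 - A).det) {w : ℕ → n → ℝ}
    (hw : ∀ t, w (t + 1) = A *ᵥ w t) (hb : Bornology.IsBounded (Set.range w)) :
    Bornology.IsBounded (Set.range fun t => ∑ s ∈ range t, w s) := by
  have htel (t : ℕ) : ∑ s ∈ range t, w s = (1 - A)⁻¹ *ᵥ (w 0 - w t) := by
    rw [← sum_range_sub', mulVec_sum]
    refine sum_congr rfl fun s _ => ?_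
    rw [hw, show w s - A *ᵥ w s = (1 - A) *ᵥ w s by rw [sub_mulVec, one_mulVec], mulVec_mulVec,
      nonsing_inv_mul _ hA, one_mulVec]
  have hL := (LinearMap.toContinuousLinearMap (1 - A)⁻¹.mulVecLin).lipschitz
  refine (hL.isBounded_image (hb.sub hb)).subset ?_
  rintro _ ⟨t, rfl⟩
  exact ⟨w 0 - w t, Set.sub_mem_sub ⟨0, rfl⟩ ⟨t, rfl⟩, (htel t).symm⟩

theorem sum_Icc_comp_add_of_abs_le {M : Type*} [AddCommMonoid M] {t : ℕ} {f : ℤ → M}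
    (hf : ∀ x, (t : ℤ) < |x| → f x = 0) {d : ℤ} (hd : |d| ≤ 1) :
    ∑ x ∈ Icc (-((t + 1 : ℕ) : ℤ)) ((t + 1 : ℕ) : ℤ), f (x + d) = ∑ x ∈ Icc (-(t : ℤ)) t, f x := by
  have hsupp {s : ℕ} {g : ℤ → M} (hg : ∀ x, (s : ℤ) < |x| → g x = 0) :
      Function.support g ⊆ Icc (-(s : ℤ)) s := fun x hx => by
    by_contra h
    simp only [coe_Icc, Set.mem_Icc, not_and_or, not_le] at h
    exact hx (hg x (by rw [lt_abs]; omega))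
  have hf' (x : ℤ) (hx : ((t + 1 : ℕ) : ℤ) < |x|) : f (x + d) = 0 := by
    rw [abs_le] at hd
    rw [lt_abs] at hx
    exact hf _ (by rw [lt_abs]; push_cast at hx; omega)
  rw [← finsum_eq_finsetSum_of_support_subset _ (hsupp hf'),
    ← finsum_eq_finsetSum_of_support_subset _ (hsupp hf)]
  exact finsum_comp_equiv (Equiv.addRight d)

def blochZX (M : Matrix (Fin 2) (Fin 2) ℂ) : Fin 2 → ℝ :=
  ![(M 0 0 - M 1 1).re, (M 0 1 + M 1 0).re]

theorem Matrix.PosSemidef.norm_blochZX_le_one {M : Matrix (Fin 2) (Fin 2) ℂ} (hM : M.PosSemidef)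
    (htr : M.trace.re = 1) : ‖blochZX M‖ ≤ 1 := by
  have hq (v : Fin 2 → ℂ) := (Complex.le_def.mp (hM.dotProduct_mulVec_nonneg v)).1
  have h0 := hq ![1, 0]
  have h1 := hq ![0, 1]
  have hp := hq ![1, 1]
  have hm := hq ![1, -1]
  simp [dotProduct, mulVec, Fin.sum_univ_two, trace_fin_two] at h0 h1 hp hm htr
  refine (pi_norm_le_iff_of_nonneg zero_le_one).mpr fun i => ?_
  rw [Real.norm_eq_abs, abs_le]
  fin_cases i <;> simp [blochZX] <;> constructor <;> linarith

section Walk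

variable (θ0 θ1 p : ℝ)

theorem owalk_eq_zero_of_lt_abs_s12 : ∀ {t : ℕ} {x : ℤ}, (t : ℤ) < |x| → owalk θ0 θ1 p t x = 0
  | 0, x, h => by simp [owalk, abs_pos.mp h]
  | t + 1, x, h => by
    rw [lt_abs] at h
    push_cast at h
    rw [owalk, owalk_eq_zero_of_lt_abs_s12 (x := x + 1) (by rw [lt_abs]; omega),
      owalk_eq_zero_of_lt_abs_s12 (x := x - 1) (by rw [lt_abs]; omega)]
    simp

theorem sum_Icc_smul_owalk_succ (g : ℤ → ℂ) (t : ℕ) :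
    ∑ x ∈ Icc (-((t + 1 : ℕ) : ℤ)) ((t + 1 : ℕ) : ℤ), g x • owalk θ0 θ1 p (t + 1) x =
      Pmat θ0 θ1 * (∑ x ∈ Icc (-(t : ℤ)) t, g (x - 1) • owalk θ0 θ1 p t x) * (Pmat θ0 θ1)ᴴ +
        Qmat θ0 θ1 * (∑ x ∈ Icc (-(t : ℤ)) t, g (x + 1) • owalk θ0 θ1 p t x) * (Qmat θ0 θ1)ᴴ := by
  have hvanish (c : ℤ → ℂ) (x : ℤ) (hx : (t : ℤ) < |x|) : c x • owalk θ0 θ1 p t x = 0 := by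
    rw [owalk_eq_zero_of_lt_abs_s12 θ0 θ1 p hx, smul_zero]
  rw [← sum_Icc_comp_add_of_abs_le (hvanish _) (d := 1) (by norm_num),
    ← sum_Icc_comp_add_of_abs_le (hvanish _) (d := -1) (by norm_num),
    mul_sum, sum_mul, mul_sum, sum_mul, ← sum_add_distrib]
  refine sum_congr rfl fun x _ => ?_
  simp only [owalk, smul_add, Matrix.mul_smul, Matrix.smul_mul, add_sub_cancel_right,
    ← sub_eq_add_neg, sub_add_cancel]

noncomputable def walkChannel (M : Matrix (Fin 2) (Fin 2) ℂ) : Matrix (Fin 2) (Fin 2) ℂ :=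
  Pmat θ0 θ1 * M * (Pmat θ0 θ1)ᴴ + Qmat θ0 θ1 * M * (Qmat θ0 θ1)ᴴ

noncomputable def totalState (t : ℕ) : Matrix (Fin 2) (Fin 2) ℂ :=
  ∑ x ∈ Icc (-(t : ℤ)) t, owalk θ0 θ1 p t x

noncomputable def firstMomentState (t : ℕ) : Matrix (Fin 2) (Fin 2) ℂ :=
  ∑ x ∈ Icc (-(t : ℤ)) t, (x : ℂ) • owalk θ0 θ1 p t x

theorem totalState_zero :
    totalState θ0 θ1 p 0 = Matrix.diagonal ![(p : ℂ), ((1 - p : ℝ) : ℂ)] := by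
  simp [totalState, owalk]

theorem totalState_succ (t : ℕ) :
    totalState θ0 θ1 p (t + 1) = walkChannel θ0 θ1 (totalState θ0 θ1 p t) := by
  simpa [totalState, walkChannel] using sum_Icc_smul_owalk_succ θ0 θ1 p 1 t

theorem firstMomentState_zero : firstMomentState θ0 θ1 p 0 = 0 := by
  simp [firstMomentState]

theorem firstMomentState_succ (t : ℕ) :
    firstMomentState θ0 θ1 p (t + 1) =
      walkChannel θ0 θ1 (firstMomentState θ0 θ1 p t) +
        (Qmat θ0 θ1 * totalState θ0 θ1 p t * (Qmat θ0 θ1)ᴴ -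
          Pmat θ0 θ1 * totalState θ0 θ1 p t * (Pmat θ0 θ1)ᴴ) := by
  have h := sum_Icc_smul_owalk_succ θ0 θ1 p (fun x => (x : ℂ)) t
  simp only [Int.cast_sub, Int.cast_add, Int.cast_one, sub_smul, add_smul, one_smul,
    sum_sub_distrib, sum_add_distrib] at h
  rw [firstMomentState, h, walkChannel, firstMomentState, totalState]
  noncomm_ring

theorem moment1_eq_re_trace_firstMomentState (t : ℕ) :
    moment1 θ0 θ1 p t = (firstMomentState θ0 θ1 p t).trace.re := by
  simp [moment1, findprob, firstMomentState, trace_sum]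

noncomputable def walkMatrix : Matrix (Fin 2) (Fin 2) ℝ :=
  !![Real.sin θ0 ^ 2 * (Real.cos θ1 ^ 2 - Real.sin θ1 ^ 2) - Real.cos θ0 ^ 2,
      2 * Real.sin θ0 ^ 2 * Real.sin θ1 * Real.cos θ1;
     2 * Real.cos θ0 * Real.sin θ0 * Real.cos θ1, 2 * Real.cos θ0 * Real.sin θ0 * Real.sin θ1]

noncomputable def driftVector : Fin 2 → ℝ :=
  ![Real.cos θ0 ^ 2 + Real.sin θ0 ^ 2 * (Real.cos θ1 ^ 2 - Real.sin θ1 ^ 2),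
    2 * Real.sin θ0 ^ 2 * Real.sin θ1 * Real.cos θ1]

theorem blochZX_walkChannel (M : Matrix (Fin 2) (Fin 2) ℂ) :
    blochZX (walkChannel θ0 θ1 M) = walkMatrix θ0 θ1 *ᵥ blochZX M := by
  ext i
  fin_cases i <;>
  · simp only [blochZX, walkChannel, Matrix.add_apply, mul_apply, conjTranspose_apply,
      Fin.sum_univ_two]
    simp [walkMatrix, Pmat, Qmat, mulVec, dotProduct, -Complex.ofReal_cos, -Complex.ofReal_sin]
    ring

theorem trace_walkChannel (M : Matrix (Fin 2) (Fin 2) ℂ) :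
    (walkChannel θ0 θ1 M).trace = M.trace := by
  have h0 : (Real.sin θ0 : ℂ) ^ 2 + (Real.cos θ0 : ℂ) ^ 2 = 1 := by
    exact_mod_cast Real.sin_sq_add_cos_sq θ0
  have h1 : (Real.sin θ1 : ℂ) ^ 2 + (Real.cos θ1 : ℂ) ^ 2 = 1 := by
    exact_mod_cast Real.sin_sq_add_cos_sq θ1
  simp only [trace_fin_two, walkChannel, Matrix.add_apply, mul_apply, conjTranspose_apply,
    Fin.sum_univ_two]
  simp [Pmat, Qmat, -Complex.ofReal_cos, -Complex.ofReal_sin]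
  linear_combination (M 0 0 + M 1 1) * (h0 + (Real.sin θ0 : ℂ) ^ 2 * h1)

theorem re_trace_Qmat_conj_sub_Pmat_conj (M : Matrix (Fin 2) (Fin 2) ℂ) :
    (Qmat θ0 θ1 * M * (Qmat θ0 θ1)ᴴ - Pmat θ0 θ1 * M * (Pmat θ0 θ1)ᴴ).trace.re =
      driftVector θ0 θ1 ⬝ᵥ blochZX M := by
  simp only [trace_fin_two, Matrix.sub_apply, mul_apply, conjTranspose_apply, Fin.sum_univ_two]
  simp [driftVector, blochZX, Pmat, Qmat, dotProduct, -Complex.ofReal_cos, -Complex.ofReal_sin]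
  ring

theorem det_one_sub_walkMatrix :
    (1 - walkMatrix θ0 θ1).det = 2 * (Real.cos θ0 - Real.sin θ0 * Real.sin θ1) ^ 2 := by
  have h0 := Real.sin_sq_add_cos_sq θ0
  have h1 := Real.sin_sq_add_cos_sq θ1
  rw [det_fin_two]
  simp [walkMatrix]
  linear_combination (-(1 + 2 * Real.cos θ0 * Real.sin θ0 * Real.sin θ1)) * h0
      + (-(1 + 2 * Real.cos θ0 * Real.sin θ0 * Real.sin θ1) * Real.sin θ0 ^ 2) * h1

theorem trace_totalState : ∀ t, (totalState θ0 θ1 p t).trace = 1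
  | 0 => by simp [totalState_zero]
  | t + 1 => by rw [totalState_succ, trace_walkChannel, trace_totalState t]

theorem posSemidef_totalState (hp0 : 0 ≤ p) (hp1 : p ≤ 1) :
    ∀ t, (totalState θ0 θ1 p t).PosSemidef
  | 0 => by
    rw [totalState_zero]
    refine PosSemidef.diagonal fun i => ?_
    fin_cases i
    · exact Complex.zero_le_real.mpr hp0
    · exact Complex.zero_le_real.mpr (sub_nonneg.mpr hp1)
  | t + 1 => by
    have h := posSemidef_totalState hp0 hp1 t
    rw [totalState_succ, walkChannel]
    exact (h.mul_mul_conjTranspose_same _).add (h.mul_mul_conjTranspose_same _)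

theorem moment1_eq_driftVector_dotProduct (t : ℕ) :
    moment1 θ0 θ1 p t =
      driftVector θ0 θ1 ⬝ᵥ ∑ s ∈ range t, blochZX (totalState θ0 θ1 p s) := by
  induction t with
  | zero => simp [moment1_eq_re_trace_firstMomentState, firstMomentState_zero]
  | succ t ih =>
    rw [moment1_eq_re_trace_firstMomentState, firstMomentState_succ, trace_add, Complex.add_re,
      trace_walkChannel, ← moment1_eq_re_trace_firstMomentState, ih,
      re_trace_Qmat_conj_sub_Pmat_conj, sum_range_succ, dotProduct_add]

end Walk

theorem owalk_moment1_bounded_general (θ0 θ1 p : ℝ) (hp0 : 0 ≤ p) (hp1 : p ≤ 1)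
    (hne : Real.cos θ0 ≠ Real.sin θ0 * Real.sin θ1) :
    ∃ C : ℝ, ∀ t : ℕ, |moment1 θ0 θ1 p t| ≤ C := by
  have hdet : IsUnit (1 - walkMatrix θ0 θ1).det := by
    rw [det_one_sub_walkMatrix, isUnit_iff_ne_zero]
    exact mul_ne_zero two_ne_zero (pow_ne_zero 2 (sub_ne_zero.mpr hne))
  have hbloch : Bornology.IsBounded (Set.range fun t => blochZX (totalState θ0 θ1 p t)) := by
    refine isBounded_iff_forall_norm_le.mpr ⟨1, ?_⟩
    rintro _ ⟨t, rfl⟩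
    exact (posSemidef_totalState θ0 θ1 p hp0 hp1 t).norm_blochZX_le_one
      (by rw [trace_totalState, Complex.one_re])
  have hsums := isBounded_range_sum_range_of_mulVec_succ hdet
    (fun t => by rw [totalState_succ, blochZX_walkChannel]) hbloch
  obtain ⟨C, hC⟩ := isBounded_iff_forall_norm_le.mp <| (LinearMap.toContinuousLinearMap
    (dotProductBilin ℝ ℝ (driftVector θ0 θ1))).lipschitz.isBounded_image hsums
  refine ⟨C, fun t => ?_⟩
  rw [moment1_eq_driftVector_dotProduct, ← Real.norm_eq_abs]
  exact hC _ ⟨_, ⟨t, rfl⟩, rfl⟩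

theorem owalk_moment1_bounded (θ0 θ1 p : ℝ) (hp0 : 0 ≤ p) (hp1 : p ≤ 1)
    (hne : Real.cos θ0 ≠ Real.sin θ0 * Real.sin θ1)
    (hsc : Real.sin θ0 * Real.cos θ1 ≠ 0) (hc0 : Real.cos θ0 ≠ 0) :
    ∃ C : ℝ, ∀ t : ℕ, |moment1 θ0 θ1 p t| ≤ C :=
  owalk_moment1_bounded_general θ0 θ1 p hp0 hp1 hne
end

section
/- For all k ∈ ℝ and λ ∈ ℂ, the characteristic polynomial of Û(k) factors as det(Û(k) − λ·I₄) = (λ + 2·c0·s0·s1·cos k) · (λ³ − 2·s0·(s0·c1² + c0·s1)·(cos k)·λ² + (4·c0·s0²·s1·(s0·c1² + c0·s1)·sin²k + 2·s0²·c1² − 1)·λ + 2·c0·s0·s1·(1 − 4·c0²·s0²·s1²·sin²k)·cos k). -/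
/-!
Swapping the basis vectors `e₂` and `e₃` commutes with `Û(k)`, so `e₂ - e₃` is an eigenvector,
with eigenvalue `-2 c0 s0 s1 cos k`: this is the linear factor. On the invariant complement
`span (e₀, e₁, e₂ + e₃)` the operator acts by a `3 × 3` matrix whose characteristic polynomial
is the cubic factor, once `e^{ik} e^{-ik} = 1` and `c0² + (s0 c1)² + (s0 s1)² = 1` are used.
-/

open Matrix Complex

/-- The matrix `A` built from `P(θ0,θ1)`. -/
noncomputable def Amat (θ0 θ1 : ℝ) : Matrix (Fin 4) (Fin 4) ℂ :=
  !![0, 0, 0, (Real.cos θ0 : ℂ);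
     0, (-((Real.sin θ0 * Real.cos θ1 : ℝ) : ℂ)), ((Real.sin θ0 * Real.sin θ1 : ℝ) : ℂ), 0;
     ((Real.sin θ0 * Real.sin θ1 : ℝ) : ℂ), 0, 0, (-((Real.sin θ0 * Real.cos θ1 : ℝ) : ℂ));
     0, (Real.cos θ0 : ℂ), 0, 0]

/-- The matrix `B` built from `Q(θ0,θ1)`. -/
noncomputable def Bmat (θ0 θ1 : ℝ) : Matrix (Fin 4) (Fin 4) ℂ :=
  !![((Real.sin θ0 * Real.cos θ1 : ℝ) : ℂ), 0, 0, ((Real.sin θ0 * Real.sin θ1 : ℝ) : ℂ);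
     0, 0, (Real.cos θ0 : ℂ), 0;
     (Real.cos θ0 : ℂ), 0, 0, 0;
     0, ((Real.sin θ0 * Real.sin θ1 : ℝ) : ℂ), ((Real.sin θ0 * Real.cos θ1 : ℝ) : ℂ), 0]

/-- The Fourier-space evolution operator `Û(k) = e^{ik} A² + e^{-ik} B²`. -/
noncomputable def Uhat (θ0 θ1 k : ℝ) : Matrix (Fin 4) (Fin 4) ℂ :=
  Complex.exp (Complex.I * (k : ℂ)) • (Amat θ0 θ1 ^ 2)
    + Complex.exp (-(Complex.I * (k : ℂ))) • (Bmat θ0 θ1 ^ 2)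

/-- `X 2 2 - X 2 3` is the eigenvalue of `X` on `e₂ - e₃`, and the `3 × 3` factor is the matrix
of `X` on `span (e₀, e₁, e₂ + e₃)`. -/
theorem det_fin_four_of_submatrix_swap_eq {R : Type*} [CommRing R] (X : Matrix (Fin 4) (Fin 4) R)
    (hX : X.submatrix (Equiv.swap 2 3) (Equiv.swap 2 3) = X) :
    X.det = (X 2 2 - X 2 3) *
      !![X 0 0, X 0 1, 2 * X 0 2; X 1 0, X 1 1, 2 * X 1 2; X 2 0, X 2 1, X 2 2 + X 2 3].det := by
  have h i j : X (Equiv.swap 2 3 i) (Equiv.swap 2 3 j) = X i j := congrFun (congrFun hX i) j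
  have h03 : X 0 3 = X 0 2 := h 0 2
  have h13 : X 1 3 = X 1 2 := h 1 2
  have h30 : X 3 0 = X 2 0 := h 2 0
  have h31 : X 3 1 = X 2 1 := h 2 1
  have h33 : X 3 3 = X 2 2 := h 2 2
  have h32 : X 3 2 = X 2 3 := h 2 3
  simp only [det_succ_row_zero, Fin.sum_univ_succ]
  simp [Fin.succAbove, Fin.lt_def, h03, h13, h30, h31, h33, h32]
  ring

section WalkSymbol

variable {R : Type*} [CommRing R]

def walkSymbol (e e' c p q : R) : Matrix (Fin 4) (Fin 4) R :=
  !![e' * p ^ 2, e * c ^ 2 + e' * q ^ 2, e' * p * q, e' * p * q;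
     e * q ^ 2 + e' * c ^ 2, e * p ^ 2, -(e * p * q), -(e * p * q);
     e' * p * c, -(e * p * c), 0, (e + e') * q * c;
     e' * p * c, -(e * p * c), (e + e') * q * c, 0]

theorem walkSymbol_submatrix_swap (e e' c p q : R) :
    (walkSymbol e e' c p q).submatrix (Equiv.swap 2 3) (Equiv.swap 2 3) =
      walkSymbol e e' c p q := by
  ext i j
  fin_cases i <;> fin_cases j <;> rfl

theorem det_walkSymbol_sub_smul_one {e e' c p q : R} (he : e * e' = 1)
    (hn : c ^ 2 + p ^ 2 + q ^ 2 = 1) (lam : R) :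
    (walkSymbol e e' c p q - lam • 1).det =
      (lam + (e + e') * c * q) *
        (lam ^ 3 - (e + e') * (p ^ 2 + c * q) * lam ^ 2
          + (-(e - e') ^ 2 * c * q * (p ^ 2 + c * q) + 2 * p ^ 2 - 1) * lam
          + (e + e') * c * q * (1 + (e - e') ^ 2 * c ^ 2 * q ^ 2)) := by
  have hX : (walkSymbol e e' c p q - lam • 1).submatrix (Equiv.swap 2 3) (Equiv.swap 2 3) =
      walkSymbol e e' c p q - lam • 1 := by
    change (walkSymbol e e' c p q).submatrix (Equiv.swap 2 3) (Equiv.swap 2 3) -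
      lam • (1 : Matrix (Fin 4) (Fin 4) R).submatrix (Equiv.swap 2 3) (Equiv.swap 2 3) = _
    rw [walkSymbol_submatrix_swap, submatrix_one_equiv]
  rw [det_fin_four_of_submatrix_swap_eq _ hX, det_fin_three]
  simp [walkSymbol]
  grind

end WalkSymbol

theorem Uhat_eq_walkSymbol (θ0 θ1 k : ℝ) :
    Uhat θ0 θ1 k = walkSymbol (cexp (I * k)) (cexp (-(I * k))) (Real.cos θ0 : ℂ)
      ((Real.sin θ0 * Real.cos θ1 : ℝ) : ℂ) ((Real.sin θ0 * Real.sin θ1 : ℝ) : ℂ) := by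
  ext i j
  fin_cases i <;> fin_cases j <;> simp [Uhat, Amat, Bmat, walkSymbol, sq] <;> ring

theorem Uhat_charpoly_factorization (θ0 θ1 : ℝ) (c0 s0 c1 s1 : ℝ)
    (hc0 : c0 = Real.cos θ0) (hs0 : s0 = Real.sin θ0)
    (hc1 : c1 = Real.cos θ1) (hs1 : s1 = Real.sin θ1) :
    ∀ (k : ℝ) (lam : ℂ),
      (Uhat θ0 θ1 k - lam • (1 : Matrix (Fin 4) (Fin 4) ℂ)).det =
        (lam + ((2 * c0 * s0 * s1 * Real.cos k : ℝ) : ℂ)) *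
          (lam ^ 3
            - ((2 * s0 * (s0 * c1 ^ 2 + c0 * s1) * Real.cos k : ℝ) : ℂ) * lam ^ 2
            + ((4 * c0 * s0 ^ 2 * s1 * (s0 * c1 ^ 2 + c0 * s1) * Real.sin k ^ 2
                  + 2 * s0 ^ 2 * c1 ^ 2 - 1 : ℝ) : ℂ) * lam
            + ((2 * c0 * s0 * s1 * (1 - 4 * c0 ^ 2 * s0 ^ 2 * s1 ^ 2 * Real.sin k ^ 2)
                  * Real.cos k : ℝ) : ℂ)) := by
  intro k lam
  subst hc0 hs0 hc1 hs1
  have hprod : cexp (I * k) * cexp (-(I * k)) = 1 := by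
    rw [← Complex.exp_add, add_neg_cancel, Complex.exp_zero]
  have hsum : cexp (I * k) + cexp (-(I * k)) = 2 * Complex.cos k := by
    rw [Complex.two_cos, neg_mul, mul_comm I]
  have hdiff : (cexp (I * k) - cexp (-(I * k))) ^ 2 = -4 * Complex.sin k ^ 2 := by
    linear_combination (cexp (I * k) + cexp (-(I * k)) + 2 * Complex.cos k) * hsum - 4 * hprod
      + 4 * Complex.sin_sq_add_cos_sq (k : ℂ)
  have hnorm : ((Real.cos θ0 : ℝ) : ℂ) ^ 2 + ((Real.sin θ0 * Real.cos θ1 : ℝ) : ℂ) ^ 2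
      + ((Real.sin θ0 * Real.sin θ1 : ℝ) : ℂ) ^ 2 = 1 := by
    norm_cast
    linear_combination Real.cos_sq_add_sin_sq θ0 + Real.sin θ0 ^ 2 * Real.cos_sq_add_sin_sq θ1
  rw [Uhat_eq_walkSymbol, det_walkSymbol_sub_smul_one hprod hnorm, hsum, hdiff]
  push_cast
  ring
end
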